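/- arXiv:2405.17254 — 5 statements merged into one kernel-verified Lean document; each statement's English description precedes it below -/
import Mathlib

section
/- Under Assumptions 1, 2, and 4, letting φ̂_{s,1} = w̃_s[(ITT̂_s − ITT̂)² − V̂_rob(ITT̂_s)], the variance estimator V̂_{σ²[ITT]} = (1/S) Σ_{s=1}^S (φ̂_{s,1} − (1/S)Σ_{s'} φ̂_{s',1})² converges in probability to v̄ = lim_{S→∞}(1/S)Σ_s E(φ²_{s,1}) − (lim_{S→∞}(1/S)Σ_s E(φ_{s,1}))², and v̄ ≥ V_{σ²[ITT]} = lim_{S→∞}(1/S)Σ_s Var(φ_{s,1}); hence V̂_{σ²[ITT]} is a conservative estimator of the asymptotic variance of the Empirical-Bayes estimator. -/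
/-!
Under Assumption 1 every site has exactly `n1 s` treated units almost surely, so with bounded
outcomes the site contrasts `T_s` and their robust variances `R_s` are uniformly bounded;
Assumption 2 makes them independent across sites, and `T_s` is unbiased for the site effect.
Chebyshev's weak law for bounded independent triangular arrays then gives convergence in
probability of the site averages of `φ_s` and `φ_s²` to `L1` and `L2`, and of `ITT̂` to `ITT`.
Replacing `ITT` by `ITT̂` changes each `φ_s` by `w̃_s (ITT - ITT̂) (2 T_s - ITT̂ - ITT)`, which moves
the empirical variance by `O(|ITT̂ - ITT|)`, so `V̂ → L2 - L1²`.
For conservativeness, `E φ_s² - Var φ_s = (E φ_s)²`, and the average of the squares `(E φ_s)²`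
dominates the square of the average of the `E φ_s`; passing to the limit gives `V ≤ L2 - L1²`.
-/

open MeasureTheory ProbabilityTheory Filter Finset
open scoped ENNReal NNReal

namespace MultiSite

variable {Ω : Type*} [MeasurableSpace Ω]

/-- Observed variable, given assignment indicator `Z` and potential versions `X0, X1`. -/
noncomputable def obs (Z X0 X1 : ℕ → ℕ → Ω → ℝ) (s i : ℕ) (ω : Ω) : ℝ :=
  Z s i ω * X1 s i ω + (1 - Z s i ω) * X0 s i ω

/-- Sample mean of `X` among treated units of site `s`. -/
noncomputable def mean1 (n n1 : ℕ → ℕ) (Z X : ℕ → ℕ → Ω → ℝ) (s : ℕ) (ω : Ω) : ℝ :=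
  (∑ i ∈ Finset.range (n s), Z s i ω * X s i ω) / (n1 s : ℝ)

/-- Sample mean of `X` among untreated units of site `s`. -/
noncomputable def mean0 (n n1 : ℕ → ℕ) (Z X : ℕ → ℕ → Ω → ℝ) (s : ℕ) (ω : Ω) : ℝ :=
  (∑ i ∈ Finset.range (n s), (1 - Z s i ω) * X s i ω) / ((n s - n1 s : ℕ) : ℝ)

/-- Degrees-of-freedom-adjusted sample variance of `X` among treated units of site `s`. -/
noncomputable def svar1 (n n1 : ℕ → ℕ) (Z X : ℕ → ℕ → Ω → ℝ) (s : ℕ) (ω : Ω) : ℝ :=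
  (∑ i ∈ Finset.range (n s), Z s i ω * (X s i ω - mean1 n n1 Z X s ω) ^ 2) /
    ((n1 s - 1 : ℕ) : ℝ)

/-- Degrees-of-freedom-adjusted sample variance of `X` among untreated units of site `s`. -/
noncomputable def svar0 (n n1 : ℕ → ℕ) (Z X : ℕ → ℕ → Ω → ℝ) (s : ℕ) (ω : Ω) : ℝ :=
  (∑ i ∈ Finset.range (n s), (1 - Z s i ω) * (X s i ω - mean0 n n1 Z X s ω) ^ 2) /
    ((n s - n1 s - 1 : ℕ) : ℝ)

/-- Degrees-of-freedom-adjusted sample covariance of `Q` and `X` among treated units. -/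
noncomputable def scov1 (n n1 : ℕ → ℕ) (Z Q X : ℕ → ℕ → Ω → ℝ) (s : ℕ) (ω : Ω) : ℝ :=
  (∑ i ∈ Finset.range (n s),
      Z s i ω * ((Q s i ω - mean1 n n1 Z Q s ω) * (X s i ω - mean1 n n1 Z X s ω))) /
    ((n1 s - 1 : ℕ) : ℝ)

/-- Degrees-of-freedom-adjusted sample covariance of `Q` and `X` among untreated units. -/
noncomputable def scov0 (n n1 : ℕ → ℕ) (Z Q X : ℕ → ℕ → Ω → ℝ) (s : ℕ) (ω : Ω) : ℝ :=
  (∑ i ∈ Finset.range (n s),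
      (1 - Z s i ω) * ((Q s i ω - mean0 n n1 Z Q s ω) * (X s i ω - mean0 n n1 Z X s ω))) /
    ((n s - n1 s - 1 : ℕ) : ℝ)

/-- Treated-minus-untreated contrast of sample means of the observed variable `X` in site `s`. -/
noncomputable def itthat (n n1 : ℕ → ℕ) (Z X : ℕ → ℕ → Ω → ℝ) (s : ℕ) (ω : Ω) : ℝ :=
  mean1 n n1 Z X s ω - mean0 n n1 Z X s ω

/-- Robust (Eicker-Huber-White) variance estimator of `itthat` in site `s`. -/
noncomputable def vrob (n n1 : ℕ → ℕ) (Z X : ℕ → ℕ → Ω → ℝ) (s : ℕ) (ω : Ω) : ℝ :=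
  svar1 n n1 Z X s ω / (n1 s : ℝ) + svar0 n n1 Z X s ω / ((n s - n1 s : ℕ) : ℝ)

/-- Population average effect in site `s` (unit 0 has the common within-site distribution). -/
noncomputable def popEff (P : Measure Ω) (X0 X1 : ℕ → ℕ → Ω → ℝ) (s : ℕ) : ℝ :=
  ∫ ω, (X1 s 0 ω - X0 s 0 ω) ∂P

/-- Population covariance of two real random variables. -/
noncomputable def covar (P : Measure Ω) (X Y : Ω → ℝ) : ℝ :=
  ∫ ω, (X ω - ∫ ω', X ω' ∂P) * (Y ω - ∫ ω', Y ω' ∂P) ∂P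

/-- Assumption 1: within each site `s`, the assignment vector is uniformly distributed over
all 0/1 vectors with exactly `n1 s` ones, with `2 ≤ n1 s ≤ n s - 2`. -/
def Assumption1 (P : Measure Ω) (n n1 : ℕ → ℕ) (Z : ℕ → ℕ → Ω → ℝ) : Prop :=
  ∀ s : ℕ, 2 ≤ n1 s ∧ n1 s + 2 ≤ n s ∧
    ∀ z : ℕ → ℝ, (∀ i ∈ Finset.range (n s), z i = 0 ∨ z i = 1) →
      (∑ i ∈ Finset.range (n s), z i) = (n1 s : ℝ) →
      P {ω | ∀ i ∈ Finset.range (n s), Z s i ω = z i} = (((n s).choose (n1 s) : ℝ≥0∞))⁻¹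

/-- Assumption 2: within each site the unit-level vectors `W s i` of potential variables are
i.i.d. across units and independent of the site's assignment vector, and the site-level
vectors (potential variables, assignments) are mutually independent across sites. -/
def Assumption2 (P : Measure Ω) {β : Type*} [MeasurableSpace β]
    (W : ℕ → ℕ → Ω → β) (Z : ℕ → ℕ → Ω → ℝ) : Prop :=
  (∀ s : ℕ, iIndepFun (W s) P) ∧
  (∀ s i j, IdentDistrib (W s i) (W s j) P P) ∧
  (∀ s : ℕ, IndepFun (fun ω i => W s i ω) (fun ω i => Z s i ω) P) ∧
  iIndepFun (fun s ω => ((fun i => W s i ω), (fun i => Z s i ω))) P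

/-- The Lyapunov central-limit condition for a (triangular array of) independent random
variables `φ S s`. -/
def Lyapunov (P : Measure Ω) (φ : ℕ → ℕ → Ω → ℝ) : Prop :=
  ∃ δ : ℝ, 0 < δ ∧
    Tendsto
      (fun S : ℕ =>
        (∑ s ∈ Finset.range S, ∫ ω, |φ S s ω - ∫ ω', φ S s ω' ∂P| ^ (2 + δ) ∂P) /
          (∑ s ∈ Finset.range S, variance (φ S s) P) ^ (1 + δ / 2))
      atTop (nhds 0)

/-- Convergence in distribution of real random variables to a limiting law `μ`, stated as
weak convergence tested against bounded continuous functions. -/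
def TendstoInDistribution (P : Measure Ω) (f : ℕ → Ω → ℝ) (μ : Measure ℝ) : Prop :=
  ∀ g : BoundedContinuousFunction ℝ ℝ,
    Tendsto (fun S => ∫ ω, g (f S ω) ∂P) atTop (nhds (∫ x, g x ∂μ))


section ConvergenceInMeasure

variable {α ι E F G : Type*} [MeasurableSpace α] {μ : Measure α} {l : Filter ι}
  [PseudoMetricSpace E] [PseudoMetricSpace F] [PseudoMetricSpace G]

theorem _root_.MeasureTheory.tendstoInMeasure_const_of_tendsto {c : ι → E} {a : E}
    (hc : Tendsto c l (nhds a)) : TendstoInMeasure μ (fun i _ => c i) l fun _ => a := by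
  rw [tendstoInMeasure_iff_dist]
  intro ε hε
  refine tendsto_const_nhds.congr' ?_
  filter_upwards [Metric.tendsto_nhds.mp hc ε hε] with i hi
  simp [not_le.mpr hi]

theorem _root_.MeasureTheory.TendstoInMeasure.comp₂_of_continuousAt {f : ι → α → E}
    {g : ι → α → F} {a : E} {b : F} {Φ : E → F → G}
    (hΦ : ContinuousAt (Function.uncurry Φ) (a, b))
    (hf : TendstoInMeasure μ f l fun _ => a) (hg : TendstoInMeasure μ g l fun _ => b) :
    TendstoInMeasure μ (fun i x => Φ (f i x) (g i x)) l fun _ => Φ a b := by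
  rw [tendstoInMeasure_iff_dist] at *
  intro ε hε
  obtain ⟨δ, hδ, hΦδ⟩ := Metric.continuousAt_iff.mp hΦ ε hε
  have hsub : ∀ i, {x | ε ≤ dist (Φ (f i x) (g i x)) (Φ a b)} ⊆
      {x | δ ≤ dist (f i x) a} ∪ {x | δ ≤ dist (g i x) b} := by
    intro i x hx
    by_contra h
    simp only [Set.mem_union, Set.mem_ofPred_eq, not_or, not_le] at h
    have hclose : dist (f i x, g i x) (a, b) < δ := by
      rw [Prod.dist_eq]
      exact max_lt h.1 h.2
    exact (hΦδ hclose).not_ge hx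
  refine tendsto_of_tendsto_of_tendsto_of_le_of_le tendsto_const_nhds
    (by simpa using (hf δ hδ).add (hg δ hδ)) (fun _ => zero_le)
    fun i => (measure_mono (hsub i)).trans (measure_union_le _ _)

theorem _root_.MeasureTheory.TendstoInMeasure.of_sub_of_tendsto {f : ι → α → ℝ} {c : ι → ℝ}
    {a : ℝ} (hf : TendstoInMeasure μ (fun i x => f i x - c i) l fun _ => 0)
    (hc : Tendsto c l (nhds a)) : TendstoInMeasure μ f l fun _ => a := by
  simpa using hf.comp₂_of_continuousAt continuous_add.continuousAt
    (tendstoInMeasure_const_of_tendsto hc)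

theorem _root_.MeasureTheory.TendstoInMeasure.of_abs_le_mul {f g : ι → α → ℝ} {M : ℝ}
    (hf : TendstoInMeasure μ f l fun _ => 0) (hg : ∀ i, ∀ᵐ x ∂μ, |g i x| ≤ M * |f i x|) :
    TendstoInMeasure μ g l fun _ => 0 := by
  rw [tendstoInMeasure_iff_dist] at *
  intro ε hε
  have hM : 0 < |M| + 1 := by positivity
  refine tendsto_of_tendsto_of_tendsto_of_le_of_le tendsto_const_nhds
    (hf (ε / (|M| + 1)) (by positivity)) (fun _ => zero_le) fun i => measure_mono_ae ?_
  filter_upwards [hg i] with x hx hεx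
  change ε ≤ dist (g i x) 0 at hεx
  change ε / (|M| + 1) ≤ dist (f i x) 0
  rw [Real.dist_eq, sub_zero] at hεx ⊢
  rw [div_le_iff₀ hM]
  nlinarith [abs_nonneg (f i x), le_abs_self M]

end ConvergenceInMeasure

section EmpiricalMoments

noncomputable def empMean (S : ℕ) (x : ℕ → ℝ) : ℝ := (∑ s ∈ range S, x s) / S

noncomputable def empVar (S : ℕ) (x : ℕ → ℝ) : ℝ := empMean S fun s => (x s - empMean S x) ^ 2

variable {S : ℕ} {x y : ℕ → ℝ}

theorem empMean_sub : empMean S (fun s => x s - y s) = empMean S x - empMean S y := by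
  simp only [empMean, sum_sub_distrib, sub_div]

theorem empMean_add : empMean S (fun s => x s + y s) = empMean S x + empMean S y := by
  simp only [empMean, sum_add_distrib, add_div]

theorem abs_empMean_le {B : ℝ} (hB : 0 ≤ B) (hx : ∀ s ∈ range S, |x s| ≤ B) :
    |empMean S x| ≤ B := by
  rcases S.eq_zero_or_pos with rfl | hS
  · simpa [empMean] using hB
  have hS' : (0 : ℝ) < S := by exact_mod_cast hS
  rw [empMean, abs_div, Nat.abs_cast, div_le_iff₀ hS']
  calc |∑ s ∈ range S, x s| ≤ ∑ s ∈ range S, |x s| := abs_sum_le_sum_abs _ _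
    _ ≤ ∑ _s ∈ range S, B := sum_le_sum hx
    _ = B * S := by simp [mul_comm]

theorem empVar_eq_empMean_sq_sub :
    empVar S x = empMean S (fun s => x s ^ 2) - empMean S x ^ 2 := by
  rcases S.eq_zero_or_pos with rfl | hS
  · simp [empVar, empMean]
  have hS' : (S : ℝ) ≠ 0 := by positivity
  simp only [empVar, empMean, sub_sq, sum_add_distrib, sum_sub_distrib, ← sum_mul, ← mul_sum,
    sum_const, card_range, nsmul_eq_mul]
  field_simp
  ring

theorem sq_empMean_le_empMean_sq : empMean S x ^ 2 ≤ empMean S fun s => x s ^ 2 := by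
  have hvar : 0 ≤ empVar S x := div_nonneg (sum_nonneg fun s _ => sq_nonneg _) S.cast_nonneg
  rw [empVar_eq_empMean_sq_sub] at hvar
  linarith

theorem abs_empVar_add_sub_le {Bx By : ℝ} (hBx : 0 ≤ Bx) (hBy : 0 ≤ By)
    (hx : ∀ s ∈ range S, |x s| ≤ Bx) (hy : ∀ s ∈ range S, |y s| ≤ By) :
    |empVar S (fun s => x s + y s) - empVar S x| ≤ 4 * By * (2 * Bx + By) := by
  have hxm := abs_empMean_le hBx hx
  have hym := abs_empMean_le hBy hy
  have hdiff : empVar S (fun s => x s + y s) - empVar S x = empMean S fun s =>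
      (y s - empMean S y) * (2 * (x s - empMean S x) + (y s - empMean S y)) := by
    rw [empVar, empVar, ← empMean_sub, empMean_add]
    congr 1
    ext s
    ring
  rw [hdiff]
  refine abs_empMean_le (by positivity) fun s hs => ?_
  have h1 : |y s - empMean S y| ≤ 2 * By := (abs_sub _ _).trans (by linarith [hy s hs])
  have h2 : |2 * (x s - empMean S x) + (y s - empMean S y)| ≤ 4 * Bx + 2 * By := by
    calc _ ≤ 2 * (|x s| + |empMean S x|) + (|y s| + |empMean S y|) := by
          refine (abs_add_le _ _).trans (add_le_add ?_ (abs_sub _ _))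
          rw [abs_mul, abs_two]
          exact mul_le_mul_of_nonneg_left (abs_sub _ _) zero_le_two
      _ ≤ 4 * Bx + 2 * By := by linarith [hx s hs, hy s hs]
  rw [abs_mul]
  calc _ ≤ 2 * By * (4 * Bx + 2 * By) := mul_le_mul h1 h2 (abs_nonneg _) (by positivity)
    _ = 4 * By * (2 * Bx + By) := by ring

end EmpiricalMoments

section WeakLaw

variable {P : Measure Ω} [IsProbabilityMeasure P]
  {X : ℕ → ℕ → Ω → ℝ}

theorem tendstoInMeasure_empMean_sub_empMean_integral (hX : ∀ S s, MemLp (X S s) 2 P)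
    {σ2 : ℝ} (hvar : ∀ S s, variance (X S s) P ≤ σ2)
    (hind : ∀ S, Pairwise fun s t => IndepFun (X S s) (X S t) P) :
    TendstoInMeasure P
      (fun S ω => empMean S (fun s => X S s ω) - empMean S fun s => P[X S s]) atTop
      fun _ => 0 := by
  rw [tendstoInMeasure_iff_dist]
  intro ε hε
  have hbound : ∀ S ≥ 1, P {ω | ε ≤ dist (empMean S (fun s => X S s ω) -
      empMean S fun s => P[X S s]) 0} ≤ ENNReal.ofReal (σ2 / ε ^ 2 / S) := by
    intro S hS
    have hS' : (0 : ℝ) < S := by exact_mod_cast hS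
    have hsum : MemLp (∑ s ∈ range S, X S s) 2 P := memLp_finsetSum' _ fun s _ => hX S s
    have hmean : P[∑ s ∈ range S, X S s] = ∑ s ∈ range S, P[X S s] := by
      simpa only [Finset.sum_apply] using
        integral_finsetSum (range S) fun s _ => (hX S s).integrable one_le_two
    have hvar_sum : variance (∑ s ∈ range S, X S s) P ≤ S * σ2 := by
      rw [IndepFun.variance_sum (fun s _ => hX S s) fun s _ t _ hst => hind S hst]
      simpa using sum_le_card_nsmul (range S) _ σ2 fun s _ => hvar S s
    calc _ ≤ P {ω | S * ε ≤ |(∑ s ∈ range S, X S s) ω - P[∑ s ∈ range S, X S s]|} := by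
          refine measure_mono fun ω hω => ?_
          change ε ≤ dist _ 0 at hω
          rw [Real.dist_eq, sub_zero, empMean, empMean, ← sub_div, abs_div, Nat.abs_cast,
            le_div_iff₀ hS'] at hω
          change S * ε ≤ _
          rw [hmean, Finset.sum_apply, mul_comm]
          exact hω
      _ ≤ ENNReal.ofReal (variance (∑ s ∈ range S, X S s) P / (S * ε) ^ 2) :=
          meas_ge_le_variance_div_sq hsum (by positivity)
      _ ≤ ENNReal.ofReal (σ2 / ε ^ 2 / S) := by
          refine ENNReal.ofReal_le_ofReal ?_
          rw [div_le_iff₀ (by positivity)]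
          calc _ ≤ S * σ2 := hvar_sum
            _ = σ2 / ε ^ 2 / S * (S * ε) ^ 2 := by field_simp
  refine tendsto_of_tendsto_of_tendsto_of_le_of_le' tendsto_const_nhds ?_
    (Eventually.of_forall fun _ => zero_le) (eventually_atTop.mpr ⟨1, hbound⟩)
  simpa using ENNReal.tendsto_ofReal (tendsto_const_div_atTop_nhds_zero_nat (σ2 / ε ^ 2))

theorem tendstoInMeasure_empMean_sub_empMean_integral_of_abs_le
    (hX : ∀ S s, AEStronglyMeasurable (X S s) P) {K : ℝ} (hK : ∀ S s, ∀ᵐ ω ∂P, |X S s ω| ≤ K)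
    (hind : ∀ S, Pairwise fun s t => IndepFun (X S s) (X S t) P) :
    TendstoInMeasure P
      (fun S ω => empMean S (fun s => X S s ω) - empMean S fun s => P[X S s]) atTop
      fun _ => 0 := by
  refine tendstoInMeasure_empMean_sub_empMean_integral (fun S s => ?_) (σ2 := K ^ 2)
    (fun S s => ?_) hind
  · exact .of_bound (hX S s) K (by simpa using hK S s)
  · convert variance_le_sq_of_bounded ((hK S s).mono fun ω hω => abs_le.mp hω)
      (hX S s).aemeasurable using 1
    ring

end WeakLaw

section Assignment

variable {P : Measure Ω} {n n1 : ℕ → ℕ} {Z : ℕ → ℕ → Ω → ℝ}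

theorem pairwiseDisjoint_setOf_eq_indicator {α : Type*} (N : ℕ) (z : ℕ → α → ℝ) :
    ((range N).powerset : Set (Finset ℕ)).PairwiseDisjoint fun t =>
      {ω | ∀ i ∈ range N, z i ω = if i ∈ t then 1 else 0} := by
  intro t ht u hu htu
  refine Set.disjoint_left.mpr fun ω hωt hωu => htu ?_
  ext i
  by_cases hi : i ∈ range N
  · have := (hωt i hi).symm.trans (hωu i hi)
    split_ifs at this <;> simp_all
  · exact iff_of_false (fun h => hi (mem_powerset.mp ht h)) fun h => hi (mem_powerset.mp hu h)

theorem Assumption1.ae_sum_eq [IsProbabilityMeasure P] (hA1 : Assumption1 P n n1 Z) {s : ℕ}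
    (hZ : ∀ i, Measurable (Z s i)) :
    ∀ᵐ ω ∂P, ∑ i ∈ range (n s), Z s i ω = n1 s := by
  obtain ⟨-, hle, hunif⟩ := hA1 s
  set T := powersetCard (n1 s) (range (n s))
  let E : Finset ℕ → Set Ω := fun t =>
    {ω | ∀ i ∈ range (n s), Z s i ω = if i ∈ t then 1 else 0}
  have hsum : ∀ t ∈ T, ∑ i ∈ range (n s), (if i ∈ t then (1 : ℝ) else 0) = n1 s := by
    intro t ht
    obtain ⟨hsub, hcard⟩ := mem_powersetCard.mp ht
    rw [sum_ite_mem, inter_eq_right.mpr hsub]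
    simp [hcard]
  have hE_meas : ∀ t, MeasurableSet (E t) := fun t => by
    simp only [E, Set.ofPred_forall]
    exact Finset.measurableSet_biInter _ fun i _ => measurableSet_eq_fun (hZ i) measurable_const
  have hE_disj : (T : Set (Finset ℕ)).PairwiseDisjoint E :=
    (pairwiseDisjoint_setOf_eq_indicator (n s) (Z s)).subset
      fun t ht => mem_powerset.mpr (mem_powersetCard.mp ht).1
  -- The `choose` admissible assignment patterns are disjoint, each of probability `choose⁻¹`.
  have hE_union : P (⋃ t ∈ T, E t) = 1 := by
    rw [measure_biUnion_finset hE_disj fun t _ => hE_meas t,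
      sum_congr rfl fun t ht => hunif _ (fun i _ => by split_ifs <;> simp) (hsum t ht),
      sum_const, card_powersetCard, card_range, nsmul_eq_mul]
    exact ENNReal.mul_inv_cancel (by exact_mod_cast (Nat.choose_pos (by omega)).ne')
      (ENNReal.natCast_ne_top _)
  have hae : ∀ᵐ ω ∂P, ω ∈ ⋃ t ∈ T, E t := by
    rw [ae_mem_iff_measure_eq
      (Finset.measurableSet_biUnion _ fun t _ => hE_meas t).nullMeasurableSet,
      hE_union, measure_univ]
  filter_upwards [hae] with ω hω
  obtain ⟨t, ht, hωt⟩ := Set.mem_iUnion₂.mp hω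
  rw [sum_congr rfl hωt, hsum t ht]

end Assignment

section WeightedAverages

variable {N : ℕ} {w x : ℕ → ℝ} {C : ℝ}

theorem abs_sum_mul_div_le {m : ℝ} (hm : 0 < m) (hw : ∀ i ∈ range N, 0 ≤ w i)
    (hsum : ∑ i ∈ range N, w i = m) (hx : ∀ i ∈ range N, |x i| ≤ C) :
    |(∑ i ∈ range N, w i * x i) / m| ≤ C := by
  rw [abs_div, abs_of_pos hm, div_le_iff₀ hm, ← hsum, mul_sum]
  refine (abs_sum_le_sum_abs _ _).trans (sum_le_sum fun i hi => ?_)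
  rw [abs_mul, abs_of_nonneg (hw i hi), mul_comm]
  exact mul_le_mul_of_nonneg_right (hx i hi) (hw i hi)

theorem sum_mul_sq_sub_div_le {m : ℕ} (hm : 2 ≤ m) (hw : ∀ i ∈ range N, 0 ≤ w i)
    (hsum : ∑ i ∈ range N, w i = m) (hx : ∀ i ∈ range N, |x i| ≤ C) {μ : ℝ} (hμ : |μ| ≤ C) :
    (∑ i ∈ range N, w i * (x i - μ) ^ 2) / ((m - 1 : ℕ) : ℝ) ≤ 8 * C ^ 2 := by
  have hm1 : ((m - 1 : ℕ) : ℝ) = m - 1 := by rw [Nat.cast_sub (by omega), Nat.cast_one]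
  have hm2 : (2 : ℝ) ≤ m := by exact_mod_cast hm
  have hdev : ∀ i ∈ range N, (x i - μ) ^ 2 ≤ 4 * C ^ 2 := fun i hi => by
    have := (abs_sub _ _).trans (add_le_add (hx i hi) hμ)
    nlinarith [sq_abs (x i - μ), abs_nonneg (x i - μ)]
  have hnum : ∑ i ∈ range N, w i * (x i - μ) ^ 2 ≤ m * (4 * C ^ 2) := by
    rw [← hsum, sum_mul]
    exact sum_le_sum fun i hi => mul_le_mul_of_nonneg_left (hdev i hi) (hw i hi)
  rw [hm1, div_le_iff₀ (by linarith)]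
  nlinarith [sq_nonneg C]

theorem sum_one_sub_eq {m : ℕ} (hm : m ≤ N) (hsum : ∑ i ∈ range N, w i = m) :
    ∑ i ∈ range N, (1 - w i) = ((N - m : ℕ) : ℝ) := by
  rw [sum_sub_distrib, hsum, Nat.cast_sub hm]
  simp

end WeightedAverages

section ObservedOutcomes

variable {Ω : Type*} {n n1 : ℕ → ℕ} {Z X : ℕ → ℕ → Ω → ℝ} {s : ℕ} {ω : Ω} {C : ℝ}

theorem abs_itthat_le (hZ : ∀ i, Z s i ω = 0 ∨ Z s i ω = 1)
    (hsum : ∑ i ∈ range (n s), Z s i ω = n1 s) (h1 : 0 < n1 s) (h0 : n1 s < n s)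
    (hX : ∀ i, |X s i ω| ≤ C) :
    |itthat n n1 Z X s ω| ≤ 2 * C := by
  have hw1 : ∀ i ∈ range (n s), 0 ≤ Z s i ω := fun i _ => by rcases hZ i with h | h <;> simp [h]
  have hw0 : ∀ i ∈ range (n s), 0 ≤ 1 - Z s i ω := fun i _ => by
    rcases hZ i with h | h <;> simp [h]
  have hm1 : |mean1 n n1 Z X s ω| ≤ C :=
    abs_sum_mul_div_le (by positivity) hw1 hsum fun i _ => hX i
  have hm0 : |mean0 n n1 Z X s ω| ≤ C :=
    abs_sum_mul_div_le (by exact_mod_cast (by omega : 0 < n s - n1 s)) hw0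
      (sum_one_sub_eq h0.le hsum) fun i _ => hX i
  calc |itthat n n1 Z X s ω| ≤ |mean1 n n1 Z X s ω| + |mean0 n n1 Z X s ω| := abs_sub _ _
    _ ≤ 2 * C := by linarith

theorem vrob_mem_Icc (hZ : ∀ i, Z s i ω = 0 ∨ Z s i ω = 1)
    (hsum : ∑ i ∈ range (n s), Z s i ω = n1 s) (h1 : 2 ≤ n1 s) (h0 : n1 s + 2 ≤ n s)
    (hX : ∀ i, |X s i ω| ≤ C) :
    vrob n n1 Z X s ω ∈ Set.Icc 0 (8 * C ^ 2) := by
  have hw1 : ∀ i ∈ range (n s), 0 ≤ Z s i ω := fun i _ => by rcases hZ i with h | h <;> simp [h]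
  have hw0 : ∀ i ∈ range (n s), 0 ≤ 1 - Z s i ω := fun i _ => by
    rcases hZ i with h | h <;> simp [h]
  have hsum0 := sum_one_sub_eq (by omega) hsum
  have hn1 : (2 : ℝ) ≤ n1 s := by exact_mod_cast h1
  have hn0 : (2 : ℝ) ≤ ((n s - n1 s : ℕ) : ℝ) := by exact_mod_cast (by omega : 2 ≤ n s - n1 s)
  have hC : 0 ≤ C := (abs_nonneg _).trans (hX 0)
  have hv1 : svar1 n n1 Z X s ω ≤ 8 * C ^ 2 :=
    sum_mul_sq_sub_div_le h1 hw1 hsum (fun i _ => hX i)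
      (abs_sum_mul_div_le (by positivity) hw1 hsum fun i _ => hX i)
  have hv0 : svar0 n n1 Z X s ω ≤ 8 * C ^ 2 :=
    sum_mul_sq_sub_div_le (by omega) hw0 hsum0 (fun i _ => hX i)
      (abs_sum_mul_div_le (by positivity) hw0 hsum0 fun i _ => hX i)
  have hv1' : 0 ≤ svar1 n n1 Z X s ω :=
    div_nonneg (sum_nonneg fun i hi => mul_nonneg (hw1 i hi) (sq_nonneg _)) (Nat.cast_nonneg _)
  have hv0' : 0 ≤ svar0 n n1 Z X s ω :=
    div_nonneg (sum_nonneg fun i hi => mul_nonneg (hw0 i hi) (sq_nonneg _)) (Nat.cast_nonneg _)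
  constructor
  · exact add_nonneg (div_nonneg hv1' (by positivity)) (div_nonneg hv0' (by positivity))
  · calc vrob n n1 Z X s ω ≤ 8 * C ^ 2 / 2 + 8 * C ^ 2 / 2 :=
          add_le_add (div_le_div₀ (by positivity) hv1 two_pos hn1)
            (div_le_div₀ (by positivity) hv0 two_pos hn0)
      _ = 8 * C ^ 2 := by ring

theorem abs_obs_le {Y0 Y1 : ℕ → ℕ → Ω → ℝ} (hZ01 : ∀ s i ω, Z s i ω = 0 ∨ Z s i ω = 1)
    (hY : ∀ s i ω, |Y0 s i ω| ≤ C ∧ |Y1 s i ω| ≤ C) (s i : ℕ) (ω : Ω) :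
    |obs Z Y0 Y1 s i ω| ≤ C := by
  rcases hZ01 s i ω with h | h <;> simp [obs, h, hY s i ω]

theorem mean1_obs {Y0 Y1 : ℕ → ℕ → Ω → ℝ} (hZ01 : ∀ i ω, Z s i ω = 0 ∨ Z s i ω = 1) :
    mean1 n n1 Z (obs Z Y0 Y1) s = fun ω => (∑ i ∈ range (n s), Z s i ω * Y1 s i ω) / n1 s := by
  ext ω
  refine congrArg (· / _) (sum_congr rfl fun i _ => ?_)
  rcases hZ01 i ω with h | h <;> simp [obs, h]

theorem mean0_obs {Y0 Y1 : ℕ → ℕ → Ω → ℝ} (hZ01 : ∀ i ω, Z s i ω = 0 ∨ Z s i ω = 1) :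
    mean0 n n1 Z (obs Z Y0 Y1) s =
      fun ω => (∑ i ∈ range (n s), (1 - Z s i ω) * Y0 s i ω) / ((n s - n1 s : ℕ) : ℝ) := by
  ext ω
  refine congrArg (· / _) (sum_congr rfl fun i _ => ?_)
  rcases hZ01 i ω with h | h <;> simp [obs, h]

end ObservedOutcomes

section Measurability

variable {n n1 : ℕ → ℕ} {Z X : ℕ → ℕ → Ω → ℝ} {s : ℕ}

theorem measurable_itthat (hZ : ∀ i, Measurable (Z s i)) (hX : ∀ i, Measurable (X s i)) :
    Measurable (itthat n n1 Z X s) := by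
  unfold itthat mean1 mean0
  fun_prop

theorem measurable_vrob (hZ : ∀ i, Measurable (Z s i)) (hX : ∀ i, Measurable (X s i)) :
    Measurable (vrob n n1 Z X s) := by
  unfold vrob svar1 svar0 mean1 mean0
  fun_prop

theorem measurable_obs {Y0 Y1 : ℕ → ℕ → Ω → ℝ} (hZ : ∀ i, Measurable (Z s i))
    (hY0 : ∀ i, Measurable (Y0 s i)) (hY1 : ∀ i, Measurable (Y1 s i)) (i : ℕ) :
    Measurable (obs Z Y0 Y1 s i) := by
  unfold obs
  fun_prop

end Measurability

section Independence

variable {P : Measure Ω} {n n1 : ℕ → ℕ} {Z Y0 Y1 : ℕ → ℕ → Ω → ℝ}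

theorem iIndepFun_comp_itthat_vrob (hA2 : Assumption2 P (fun s i ω => (Y0 s i ω, Y1 s i ω)) Z)
    (G : ℕ → ℝ → ℝ → ℝ) (hG : ∀ s, Measurable (Function.uncurry (G s))) :
    iIndepFun (fun s ω => G s (itthat n n1 Z (obs Z Y0 Y1) s ω)
      (vrob n n1 Z (obs Z Y0 Y1) s ω)) P := by
  -- Both statistics are the same formulas evaluated on the coordinate process of the site data,
  -- whose law is independent across sites.
  let Zc : ℕ → ℕ → (ℕ → ℝ × ℝ) × (ℕ → ℝ) → ℝ := fun _ i p => p.2 i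
  let Y0c : ℕ → ℕ → (ℕ → ℝ × ℝ) × (ℕ → ℝ) → ℝ := fun _ i p => (p.1 i).1
  let Y1c : ℕ → ℕ → (ℕ → ℝ × ℝ) × (ℕ → ℝ) → ℝ := fun _ i p => (p.1 i).2
  have hZc : ∀ s i, Measurable (Zc s i) := fun s i => by fun_prop
  have hobs : ∀ s i, Measurable (obs Zc Y0c Y1c s i) := fun s =>
    measurable_obs (hZc s) (fun i => by fun_prop) fun i => by fun_prop
  exact hA2.2.2.2.comp
    (fun s p => G s (itthat n n1 Zc (obs Zc Y0c Y1c) s p) (vrob n n1 Zc (obs Zc Y0c Y1c) s p))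
    fun s => (hG s).comp
      ((measurable_itthat (hZc s) (hobs s)).prodMk (measurable_vrob (hZc s) (hobs s)))

end Independence

section Unbiasedness

variable {P : Measure Ω} [IsProbabilityMeasure P]

theorem integral_sum_mul_div_eq {N : ℕ} {m μ₀ : ℝ} (hm : m ≠ 0) {W X : ℕ → Ω → ℝ}
    (hW : ∀ i, Integrable (W i) P) (hX : ∀ i, Integrable (X i) P)
    (hind : ∀ i, IndepFun (W i) (X i) P) (hXμ : ∀ i, P[X i] = μ₀)
    (hsum : ∀ᵐ ω ∂P, ∑ i ∈ range N, W i ω = m) :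
    ∫ ω, (∑ i ∈ range N, W i ω * X i ω) / m ∂P = μ₀ := by
  have hEW : ∑ i ∈ range N, P[W i] = m := by
    rw [← integral_finsetSum _ fun i _ => hW i, integral_congr_ae hsum]
    simp
  have hEWX : ∀ i, ∫ ω, W i ω * X i ω ∂P = P[W i] * μ₀ := fun i => by
    rw [← hXμ i]
    exact (hind i).integral_mul_eq_mul_integral (hW i).1 (hX i).1
  have hWX : ∀ i, Integrable (fun ω => W i ω * X i ω) P := fun i =>
    (hind i).integrable_mul (hW i) (hX i)
  rw [integral_div, integral_finsetSum _ fun i _ => hWX i]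
  simp only [hEWX, ← sum_mul, hEW]
  field_simp

variable {n n1 : ℕ → ℕ} {Z Y0 Y1 : ℕ → ℕ → Ω → ℝ} {s : ℕ} {C : ℝ}

theorem integral_itthat_obs
    (hmeas : ∀ i, Measurable (Z s i) ∧ Measurable (Y0 s i) ∧ Measurable (Y1 s i))
    (hZ01 : ∀ i ω, Z s i ω = 0 ∨ Z s i ω = 1) (hY : ∀ i ω, |Y0 s i ω| ≤ C ∧ |Y1 s i ω| ≤ C)
    (hA2 : Assumption2 P (fun s i ω => (Y0 s i ω, Y1 s i ω)) Z)
    (hsum : ∀ᵐ ω ∂P, ∑ i ∈ range (n s), Z s i ω = n1 s) (h1 : 0 < n1 s) (h0 : n1 s < n s) :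
    ∫ ω, itthat n n1 Z (obs Z Y0 Y1) s ω ∂P = popEff P Y0 Y1 s := by
  obtain ⟨-, hident, hindep, -⟩ := hA2
  have hZ : ∀ i, Integrable (Z s i) P := fun i =>
    .of_bound (hmeas i).1.aestronglyMeasurable 1 (.of_forall fun ω => by
      rcases hZ01 i ω with h | h <;> simp [h])
  have hZ' : ∀ i, Integrable (fun ω => 1 - Z s i ω) P := fun i => (integrable_const 1).sub (hZ i)
  have hY0 : ∀ i, Integrable (Y0 s i) P := fun i =>
    .of_bound (hmeas i).2.1.aestronglyMeasurable C (.of_forall fun ω => (hY i ω).1)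
  have hY1 : ∀ i, Integrable (Y1 s i) P := fun i =>
    .of_bound (hmeas i).2.2.aestronglyMeasurable C (.of_forall fun ω => (hY i ω).2)
  have hind1 : ∀ i, IndepFun (Z s i) (Y1 s i) P := fun i =>
    (hindep s).symm.comp (measurable_pi_apply i) (measurable_snd.comp (measurable_pi_apply i))
  have hind0 : ∀ i, IndepFun (fun ω => 1 - Z s i ω) (Y0 s i) P := fun i =>
    (hindep s).symm.comp (measurable_const.sub (measurable_pi_apply i))
      (measurable_fst.comp (measurable_pi_apply i))
  have hint1 : Integrable (mean1 n n1 Z (obs Z Y0 Y1) s) P := by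
    rw [mean1_obs hZ01]
    exact (integrable_finsetSum _ fun i _ => (hind1 i).integrable_mul (hZ i) (hY1 i)).div_const _
  have hint0 : Integrable (mean0 n n1 Z (obs Z Y0 Y1) s) P := by
    rw [mean0_obs hZ01]
    exact (integrable_finsetSum _ fun i _ => (hind0 i).integrable_mul (hZ' i) (hY0 i)).div_const _
  simp only [popEff, itthat]
  rw [integral_sub (hY1 0) (hY0 0), integral_sub hint1 hint0, mean1_obs hZ01, mean0_obs hZ01]
  congr 1
  · exact integral_sum_mul_div_eq (by positivity) hZ hY1 hind1
      (fun i => ((hident s i 0).comp measurable_snd).integral_eq) hsum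
  · exact integral_sum_mul_div_eq (by exact_mod_cast (by omega : n s - n1 s ≠ 0)) hZ' hY0 hind0
      (fun i => ((hident s i 0).comp measurable_fst).integral_eq)
      (hsum.mono fun ω hω => sum_one_sub_eq h0.le hω)

end Unbiasedness

section Recentering

theorem abs_mul_sq_sub_sub_le {w t c r N D : ℝ} (hw : |w| ≤ N) (ht : |t| ≤ D) (hc : |c| ≤ D)
    (hr : r ∈ Set.Icc 0 (D ^ 2)) : |w * ((t - c) ^ 2 - r)| ≤ 4 * N * D ^ 2 := by
  have htc : (t - c) ^ 2 ≤ 4 * D ^ 2 := by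
    have := (abs_sub t c).trans (add_le_add ht hc)
    nlinarith [sq_abs (t - c), abs_nonneg (t - c)]
  have hsq : |(t - c) ^ 2 - r| ≤ 4 * D ^ 2 :=
    abs_le.mpr ⟨by nlinarith [hr.2, sq_nonneg (t - c)], by linarith [hr.1]⟩
  calc |w * ((t - c) ^ 2 - r)| ≤ N * (4 * D ^ 2) := by
        rw [abs_mul]; exact mul_le_mul hw hsq (abs_nonneg _) ((abs_nonneg _).trans hw)
    _ = 4 * N * D ^ 2 := by ring

theorem abs_empVar_recenter_sub_le {S : ℕ} {w t r : ℕ → ℝ} {a b N D : ℝ}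
    (hw : ∀ s, |w s| ≤ N) (ht : ∀ s ∈ range S, |t s| ≤ D)
    (hr : ∀ s ∈ range S, r s ∈ Set.Icc 0 (D ^ 2)) (ha : |a| ≤ D) (hb : |b| ≤ D) :
    |empVar S (fun s => w s * ((t s - a) ^ 2 - r s)) -
      empVar S (fun s => w s * ((t s - b) ^ 2 - r s))| ≤ 256 * N ^ 2 * D ^ 3 * |a - b| := by
  have hN : 0 ≤ N := (abs_nonneg _).trans (hw 0)
  have hD : 0 ≤ D := (abs_nonneg _).trans ha
  have hab : |a - b| ≤ 2 * D := (abs_sub _ _).trans (by linarith)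
  have hy : ∀ s ∈ range S, |w s * ((t s - a) ^ 2 - r s) - w s * ((t s - b) ^ 2 - r s)| ≤
      4 * N * D * |a - b| := fun s hs => by
    have h2t : |2 * t s - a - b| ≤ 4 * D := by
      have := abs_le.mp (ht s hs); have := abs_le.mp ha; have := abs_le.mp hb
      exact abs_le.mpr ⟨by linarith, by linarith⟩
    calc _ = |w s| * |b - a| * |2 * t s - a - b| := by
          rw [← abs_mul, ← abs_mul]; ring_nf
      _ ≤ N * |a - b| * (4 * D) := by
          rw [abs_sub_comm b a]
          exact mul_le_mul (mul_le_mul_of_nonneg_right (hw s) (abs_nonneg _)) h2t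
            (abs_nonneg _) (by positivity)
      _ = 4 * N * D * |a - b| := by ring
  have key := abs_empVar_add_sub_le (by positivity) (by positivity)
    (fun s hs => abs_mul_sq_sub_sub_le (hw s) (ht s hs) hb (hr s hs)) hy
  simp only [add_sub_cancel] at key
  have hy_le : 4 * N * D * |a - b| ≤ 4 * N * D * (2 * D) := by gcongr
  calc _ ≤ 4 * (4 * N * D * |a - b|) * (2 * (4 * N * D ^ 2) + 4 * N * D * (2 * D)) := by
        refine key.trans ?_
        gcongr
    _ = 256 * N ^ 2 * D ^ 3 * |a - b| := by ring

end Recentering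

section Consistency

variable {P : Measure Ω}

theorem ae_abs_mul_sq_sub_sub_le {w c : ℕ → ℝ} {t r : ℕ → Ω → ℝ} {N D : ℝ}
    (hw : ∀ s, |w s| ≤ N) (hD : ∀ᵐ ω ∂P, ∀ s, |t s ω| ≤ D ∧ r s ω ∈ Set.Icc 0 (D ^ 2))
    (hc : ∀ S, |c S| ≤ D) (S s : ℕ) :
    ∀ᵐ ω ∂P, |w s * ((t s ω - c S) ^ 2 - r s ω)| ≤ 4 * N * D ^ 2 :=
  hD.mono fun _ h => abs_mul_sq_sub_sub_le (hw s) (h s).1 (hc S) (h s).2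

theorem tendstoInMeasure_empVar_recenter {w c : ℕ → ℝ} {t r ĉ : ℕ → Ω → ℝ} {N D L1 L2 : ℝ}
    (hw : ∀ s, |w s| ≤ N) (hD : ∀ᵐ ω ∂P, ∀ s, |t s ω| ≤ D ∧ r s ω ∈ Set.Icc 0 (D ^ 2))
    (hc : ∀ S, |c S| ≤ D) (hĉ : ∀ S, ∀ᵐ ω ∂P, |ĉ S ω| ≤ D)
    (hĉc : TendstoInMeasure P (fun S ω => ĉ S ω - c S) atTop fun _ => 0)
    (h1 : TendstoInMeasure P (fun S ω => empMean S fun s => w s * ((t s ω - c S) ^ 2 - r s ω))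
      atTop fun _ => L1)
    (h2 : TendstoInMeasure P
      (fun S ω => empMean S fun s => (w s * ((t s ω - c S) ^ 2 - r s ω)) ^ 2) atTop fun _ => L2) :
    TendstoInMeasure P (fun S ω => empVar S fun s => w s * ((t s ω - ĉ S ω) ^ 2 - r s ω))
      atTop fun _ => L2 - L1 ^ 2 := by
  have hvar : TendstoInMeasure P
      (fun S ω => empVar S fun s => w s * ((t s ω - c S) ^ 2 - r s ω)) atTop
      fun _ => L2 - L1 ^ 2 := by
    simpa only [empVar_eq_empMean_sq_sub] using
      h2.comp₂_of_continuousAt (Φ := fun u v => u - v ^ 2) (by fun_prop) h1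
  have herr := hĉc.of_abs_le_mul (g := fun S ω =>
      (empVar S fun s => w s * ((t s ω - ĉ S ω) ^ 2 - r s ω)) -
        empVar S fun s => w s * ((t s ω - c S) ^ 2 - r s ω))
    fun S => by
      filter_upwards [hD, hĉ S] with ω hωD hωĉ
      exact abs_empVar_recenter_sub_le hw (fun s _ => (hωD s).1) (fun s _ => (hωD s).2) hωĉ
        (hc S)
  simpa using herr.comp₂_of_continuousAt continuous_add.continuousAt hvar

theorem le_sub_sq_of_tendsto_empMean [IsProbabilityMeasure P] {φ : ℕ → ℕ → Ω → ℝ}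
    (hφ : ∀ S s, MemLp (φ S s) 2 P) {L1 L2 V : ℝ}
    (hE1 : Tendsto (fun S => empMean S fun s => P[φ S s]) atTop (nhds L1))
    (hE2 : Tendsto (fun S => empMean S fun s => ∫ ω, φ S s ω ^ 2 ∂P) atTop (nhds L2))
    (hV : Tendsto (fun S => empMean S fun s => variance (φ S s) P) atTop (nhds V)) :
    V ≤ L2 - L1 ^ 2 := by
  have hsq : Tendsto (fun S => empMean S fun s => P[φ S s] ^ 2) atTop (nhds (L2 - V)) := by
    refine (hE2.sub hV).congr fun S => ?_
    rw [← empMean_sub]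
    congr 1
    ext s
    rw [variance_eq_sub (hφ S s)]
    simp
  have := le_of_tendsto_of_tendsto' (hE1.pow 2) hsq fun S => sq_empMean_le_empMean_sq
  linarith

end Consistency

section SiteLevelLimits

variable {P : Measure Ω} [IsProbabilityMeasure P]
  {n n1 : ℕ → ℕ} {Z Y0 Y1 : ℕ → ℕ → Ω → ℝ} {C : ℝ}

theorem abs_popEff_le (hY : ∀ s i ω, |Y0 s i ω| ≤ C ∧ |Y1 s i ω| ≤ C) (s : ℕ) :
    |popEff P Y0 Y1 s| ≤ 2 * C := by
  rw [popEff]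
  simpa using norm_integral_le_of_norm_le_const (μ := P) (Eventually.of_forall fun ω =>
    (abs_sub _ _).trans (by linarith [hY s 0 ω]) : ∀ᵐ ω ∂P, ‖Y1 s 0 ω - Y0 s 0 ω‖ ≤ 2 * C)

theorem ae_abs_itthat_le_and_vrob_mem (hA1 : Assumption1 P n n1 Z)
    (hZ : ∀ s i, Measurable (Z s i)) (hZ01 : ∀ s i ω, Z s i ω = 0 ∨ Z s i ω = 1)
    {X : ℕ → ℕ → Ω → ℝ} (hX : ∀ s i ω, |X s i ω| ≤ C) :
    ∀ᵐ ω ∂P, ∀ s, |itthat n n1 Z X s ω| ≤ 2 * C ∧ vrob n n1 Z X s ω ∈ Set.Icc 0 (8 * C ^ 2) := by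
  rw [ae_all_iff]
  intro s
  filter_upwards [hA1.ae_sum_eq (hZ s)] with ω hω
  obtain ⟨h1, h0, -⟩ := hA1 s
  exact ⟨abs_itthat_le (hZ01 s · ω) hω (by omega) (by omega) (hX s · ω),
    vrob_mem_Icc (hZ01 s · ω) hω h1 h0 (hX s · ω)⟩

theorem measurable_comp_itthat_vrob
    (hmeas : ∀ s i, Measurable (Z s i) ∧ Measurable (Y0 s i) ∧ Measurable (Y1 s i))
    {G : ℝ → ℝ → ℝ} (hG : Measurable (Function.uncurry G)) (s : ℕ) :
    Measurable fun ω => G (itthat n n1 Z (obs Z Y0 Y1) s ω) (vrob n n1 Z (obs Z Y0 Y1) s ω) := by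
  have hobs : ∀ i, Measurable (obs Z Y0 Y1 s i) :=
    measurable_obs (hmeas s · |>.1) (hmeas s · |>.2.1) (hmeas s · |>.2.2)
  exact hG.comp ((measurable_itthat (hmeas s · |>.1) hobs).prodMk
    (measurable_vrob (hmeas s · |>.1) hobs))

theorem tendstoInMeasure_empMean_comp_itthat_vrob_sub
    (hmeas : ∀ s i, Measurable (Z s i) ∧ Measurable (Y0 s i) ∧ Measurable (Y1 s i))
    (hA2 : Assumption2 P (fun s i ω => (Y0 s i ω, Y1 s i ω)) Z)
    (G : ℕ → ℕ → ℝ → ℝ → ℝ) (hG : ∀ S s, Measurable (Function.uncurry (G S s))) {K : ℝ}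
    (hK : ∀ S s, ∀ᵐ ω ∂P,
      |G S s (itthat n n1 Z (obs Z Y0 Y1) s ω) (vrob n n1 Z (obs Z Y0 Y1) s ω)| ≤ K) :
    TendstoInMeasure P (fun S ω =>
      (empMean S fun s => G S s (itthat n n1 Z (obs Z Y0 Y1) s ω) (vrob n n1 Z (obs Z Y0 Y1) s ω))
        - empMean S fun s =>
          ∫ ω, G S s (itthat n n1 Z (obs Z Y0 Y1) s ω) (vrob n n1 Z (obs Z Y0 Y1) s ω) ∂P)
      atTop fun _ => 0 :=
  tendstoInMeasure_empMean_sub_empMean_integral_of_abs_le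
    (X := fun S s ω => G S s (itthat n n1 Z (obs Z Y0 Y1) s ω) (vrob n n1 Z (obs Z Y0 Y1) s ω))
    (fun S s => (measurable_comp_itthat_vrob hmeas (hG S s) s).aestronglyMeasurable) hK
    fun S _ _ => (iIndepFun_comp_itthat_vrob hA2 (G S) (hG S)).indepFun

theorem tendstoInMeasure_empMean_itthat_sub_popEff
    (hmeas : ∀ s i, Measurable (Z s i) ∧ Measurable (Y0 s i) ∧ Measurable (Y1 s i))
    (hZ01 : ∀ s i ω, Z s i ω = 0 ∨ Z s i ω = 1) (hY : ∀ s i ω, |Y0 s i ω| ≤ C ∧ |Y1 s i ω| ≤ C)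
    (hA1 : Assumption1 P n n1 Z) (hA2 : Assumption2 P (fun s i ω => (Y0 s i ω, Y1 s i ω)) Z)
    {w : ℕ → ℝ} {N : ℝ} (hw : ∀ s, |w s| ≤ N) :
    TendstoInMeasure P (fun S ω => (empMean S fun s => w s * itthat n n1 Z (obs Z Y0 Y1) s ω) -
      empMean S fun s => w s * popEff P Y0 Y1 s) atTop fun _ => 0 := by
  have hT := ae_abs_itthat_le_and_vrob_mem hA1 (hmeas · · |>.1) hZ01 (abs_obs_le hZ01 hY)
  have hlim := tendstoInMeasure_empMean_comp_itthat_vrob_sub hmeas hA2 (fun _ s t _ => w s * t)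
    (fun _ _ => by fun_prop) (K := N * (2 * C)) fun S s => hT.mono fun ω hω => by
      rw [abs_mul]
      exact mul_le_mul (hw s) (hω s).1 (abs_nonneg _) ((abs_nonneg _).trans (hw s))
  have hunbiased : ∀ s, ∫ ω, itthat n n1 Z (obs Z Y0 Y1) s ω ∂P = popEff P Y0 Y1 s := fun s =>
    integral_itthat_obs (hmeas s) (hZ01 s) (hY s) hA2 (hA1.ae_sum_eq (hmeas s · |>.1))
      (by linarith [(hA1 s).1]) (by linarith [(hA1 s).2.1])
  simpa only [integral_const_mul, hunbiased] using hlim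

end SiteLevelLimits

section SiteLevelConsistency

variable {P : Measure Ω} [IsProbabilityMeasure P]
  {n n1 : ℕ → ℕ} {Z Y0 Y1 : ℕ → ℕ → Ω → ℝ} {C : ℝ} {w : ℕ → ℝ} {N : ℝ}

theorem exists_uniform_bound (hA1 : Assumption1 P n n1 Z) (hZ : ∀ s i, Measurable (Z s i))
    (hZ01 : ∀ s i ω, Z s i ω = 0 ∨ Z s i ω = 1) (hY : ∀ s i ω, |Y0 s i ω| ≤ C ∧ |Y1 s i ω| ≤ C)
    (hw : ∀ s, |w s| ≤ N) :
    ∃ D, (∀ᵐ ω ∂P, ∀ s, |itthat n n1 Z (obs Z Y0 Y1) s ω| ≤ D ∧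
        vrob n n1 Z (obs Z Y0 Y1) s ω ∈ Set.Icc 0 (D ^ 2)) ∧
      (∀ S, |empMean S fun s => w s * popEff P Y0 Y1 s| ≤ D) ∧
      ∀ S, ∀ᵐ ω ∂P, |empMean S fun s => w s * itthat n n1 Z (obs Z Y0 Y1) s ω| ≤ D := by
  have hN : 0 ≤ N := (abs_nonneg _).trans (hw 0)
  have hY' : ∀ s i ω, |Y0 s i ω| ≤ |C| ∧ |Y1 s i ω| ≤ |C| := fun s i ω =>
    ⟨(hY s i ω).1.trans (le_abs_self _), (hY s i ω).2.trans (le_abs_self _)⟩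
  have hsite := ae_abs_itthat_le_and_vrob_mem hA1 hZ hZ01 (abs_obs_le hZ01 hY')
  have hwD : ∀ s {x : ℝ}, |x| ≤ 2 * |C| → |w s * x| ≤ 2 * (N + 2) * |C| := fun s x hx => by
    rw [abs_mul]
    nlinarith [abs_nonneg (w s), abs_nonneg x, hw s, mul_nonneg hN (abs_nonneg C)]
  -- `2 * (N + 2) * |C|` dominates `2 * |C|`, `2 * N * |C|` and `√8 * |C|`.
  refine ⟨2 * (N + 2) * |C|, hsite.mono fun ω h s => ⟨(h s).1.trans ?_, (h s).2.1,
      (h s).2.2.trans ?_⟩, fun S => abs_empMean_le (by positivity) fun s _ =>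
        hwD s (abs_popEff_le hY' s), fun S => hsite.mono fun ω h =>
        abs_empMean_le (by positivity) fun s _ => hwD s (h s).1⟩
  · nlinarith [abs_nonneg C]
  · nlinarith [mul_nonneg (mul_nonneg hN hN) (sq_nonneg |C|), mul_nonneg hN (sq_nonneg |C|)]

theorem memLp_phi (hmeas : ∀ s i, Measurable (Z s i) ∧ Measurable (Y0 s i) ∧ Measurable (Y1 s i))
    (hZ01 : ∀ s i ω, Z s i ω = 0 ∨ Z s i ω = 1) (hY : ∀ s i ω, |Y0 s i ω| ≤ C ∧ |Y1 s i ω| ≤ C)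
    (hA1 : Assumption1 P n n1 Z) (hw : ∀ s, |w s| ≤ N) (S s : ℕ) :
    MemLp (fun ω => w s * ((itthat n n1 Z (obs Z Y0 Y1) s ω -
      empMean S fun s' => w s' * popEff P Y0 Y1 s') ^ 2 - vrob n n1 Z (obs Z Y0 Y1) s ω)) 2 P := by
  obtain ⟨D, hD, hc, -⟩ := exists_uniform_bound hA1 (hmeas · · |>.1) hZ01 hY hw
  exact .of_bound (measurable_comp_itthat_vrob hmeas (G := fun t r => w s * ((t -
    empMean S fun s' => w s' * popEff P Y0 Y1 s') ^ 2 - r)) (by fun_prop) s).aestronglyMeasurable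
    _ (ae_abs_mul_sq_sub_sub_le hw hD hc S s)

theorem tendstoInMeasure_empVar_phihat
    (hmeas : ∀ s i, Measurable (Z s i) ∧ Measurable (Y0 s i) ∧ Measurable (Y1 s i))
    (hZ01 : ∀ s i ω, Z s i ω = 0 ∨ Z s i ω = 1) (hY : ∀ s i ω, |Y0 s i ω| ≤ C ∧ |Y1 s i ω| ≤ C)
    (hA1 : Assumption1 P n n1 Z) (hA2 : Assumption2 P (fun s i ω => (Y0 s i ω, Y1 s i ω)) Z)
    (hw : ∀ s, |w s| ≤ N) {L1 L2 : ℝ}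
    (hE1 : Tendsto (fun S => empMean S fun s => ∫ ω, w s *
      ((itthat n n1 Z (obs Z Y0 Y1) s ω - empMean S fun s' => w s' * popEff P Y0 Y1 s') ^ 2 -
        vrob n n1 Z (obs Z Y0 Y1) s ω) ∂P) atTop (nhds L1))
    (hE2 : Tendsto (fun S => empMean S fun s => ∫ ω, (w s *
      ((itthat n n1 Z (obs Z Y0 Y1) s ω - empMean S fun s' => w s' * popEff P Y0 Y1 s') ^ 2 -
        vrob n n1 Z (obs Z Y0 Y1) s ω)) ^ 2 ∂P) atTop (nhds L2)) :
    TendstoInMeasure P (fun S ω => empVar S fun s => w s *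
      ((itthat n n1 Z (obs Z Y0 Y1) s ω - empMean S fun s' => w s' * itthat n n1 Z
        (obs Z Y0 Y1) s' ω) ^ 2 - vrob n n1 Z (obs Z Y0 Y1) s ω)) atTop fun _ => L2 - L1 ^ 2 := by
  obtain ⟨D, hD, hc, hĉ⟩ := exists_uniform_bound hA1 (hmeas · · |>.1) hZ01 hY hw
  have hφ := ae_abs_mul_sq_sub_sub_le hw hD hc
  have hφ2 : ∀ S s, ∀ᵐ ω ∂P, |(w s * ((itthat n n1 Z (obs Z Y0 Y1) s ω -
      (empMean S fun s' => w s' * popEff P Y0 Y1 s')) ^ 2 - vrob n n1 Z (obs Z Y0 Y1) s ω)) ^ 2|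
        ≤ (4 * N * D ^ 2) ^ 2 := fun S s =>
    (hφ S s).mono fun ω h => by rw [abs_pow]; exact pow_le_pow_left₀ (abs_nonneg _) h 2
  have hU1 := (tendstoInMeasure_empMean_comp_itthat_vrob_sub hmeas hA2
    (fun S s t r => w s * ((t - empMean S fun s' => w s' * popEff P Y0 Y1 s') ^ 2 - r))
    (fun _ _ => by fun_prop) hφ).of_sub_of_tendsto hE1
  have hU2 := (tendstoInMeasure_empMean_comp_itthat_vrob_sub hmeas hA2
    (fun S s t r => (w s * ((t - empMean S fun s' => w s' * popEff P Y0 Y1 s') ^ 2 - r)) ^ 2)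
    (fun _ _ => by fun_prop) hφ2).of_sub_of_tendsto hE2
  exact tendstoInMeasure_empVar_recenter (t := fun s ω => itthat n n1 Z (obs Z Y0 Y1) s ω)
    (r := fun s ω => vrob n n1 Z (obs Z Y0 Y1) s ω)
    (c := fun S => empMean S fun s => w s * popEff P Y0 Y1 s)
    (ĉ := fun S ω => empMean S fun s => w s * itthat n n1 Z (obs Z Y0 Y1) s ω) hw hD hc hĉ
    (tendstoInMeasure_empMean_itthat_sub_popEff hmeas hZ01 hY hA1 hA2 hw) hU1 hU2

end SiteLevelConsistency

theorem statement1_general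
    {Ω : Type*} [MeasurableSpace Ω] (P : Measure Ω) [IsProbabilityMeasure P]
    (n n1 : ℕ → ℕ) (Z Y0 Y1 : ℕ → ℕ → Ω → ℝ)
    (hmeas : ∀ s i, Measurable (Z s i) ∧ Measurable (Y0 s i) ∧ Measurable (Y1 s i))
    (hZ01 : ∀ s i ω, Z s i ω = 0 ∨ Z s i ω = 1)
    (hbd : ∃ C : ℝ, ∀ s i ω, |Y0 s i ω| ≤ C ∧ |Y1 s i ω| ≤ C)
    (hA1 : Assumption1 P n n1 Z)
    (hA2 : Assumption2 P (fun s i ω => (Y0 s i ω, Y1 s i ω)) Z)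
    (wt : ℕ → ℝ)
    (hw0 : ∀ s, 0 ≤ wt s)
    (hwbd : ∃ N : ℝ, 0 < N ∧ ∀ s, wt s ≤ N)
    (ITTpop : ℕ → ℝ)
    (hITTpop : ∀ S, ITTpop S = (∑ s ∈ Finset.range S, wt s * popEff P Y0 Y1 s) / (S : ℝ))
    (ITThatAgg : ℕ → Ω → ℝ)
    (hAgg : ∀ S ω, ITThatAgg S ω =
      (∑ s ∈ Finset.range S, wt s * itthat n n1 Z (obs Z Y0 Y1) s ω) / (S : ℝ))
    (phi1 : ℕ → ℕ → Ω → ℝ)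
    (hphi1 : ∀ S s ω, phi1 S s ω = wt s *
      ((itthat n n1 Z (obs Z Y0 Y1) s ω - ITTpop S) ^ 2 - vrob n n1 Z (obs Z Y0 Y1) s ω))
    (phihat : ℕ → ℕ → Ω → ℝ)
    (hphihat : ∀ S s ω, phihat S s ω = wt s *
      ((itthat n n1 Z (obs Z Y0 Y1) s ω - ITThatAgg S ω) ^ 2 - vrob n n1 Z (obs Z Y0 Y1) s ω))
    (Vhat : ℕ → Ω → ℝ)
    (hVhat : ∀ S ω, Vhat S ω = (∑ s ∈ Finset.range S,
      (phihat S s ω - (∑ s' ∈ Finset.range S, phihat S s' ω) / (S : ℝ)) ^ 2) / (S : ℝ))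
    (L1 L2 V : ℝ)
    (hE1 : Tendsto
      (fun S => (∑ s ∈ Finset.range S, ∫ ω, phi1 S s ω ∂P) / (S : ℝ)) atTop (nhds L1))
    (hE2 : Tendsto
      (fun S => (∑ s ∈ Finset.range S, ∫ ω, (phi1 S s ω) ^ 2 ∂P) / (S : ℝ)) atTop (nhds L2))
    (hVlim : Tendsto
      (fun S => (∑ s ∈ Finset.range S, variance (phi1 S s) P) / (S : ℝ)) atTop (nhds V)) :
    TendstoInMeasure P Vhat atTop (fun _ => L2 - L1 ^ 2) ∧ V ≤ L2 - L1 ^ 2 := by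
  obtain ⟨C, hY⟩ := hbd
  obtain ⟨N, -, hwN⟩ := hwbd
  have hw : ∀ s, |wt s| ≤ N := fun s => abs_le.mpr ⟨by linarith [hw0 s, hwN s], hwN s⟩
  obtain rfl : ITTpop = fun S => empMean S fun s => wt s * popEff P Y0 Y1 s := funext hITTpop
  obtain rfl : ITThatAgg = fun S ω => empMean S fun s => wt s * itthat n n1 Z (obs Z Y0 Y1) s ω :=
    by ext; exact hAgg ..
  obtain rfl : phi1 = fun S s ω => wt s * ((itthat n n1 Z (obs Z Y0 Y1) s ω -
      empMean S fun s' => wt s' * popEff P Y0 Y1 s') ^ 2 - vrob n n1 Z (obs Z Y0 Y1) s ω) := by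
    ext; exact hphi1 ..
  obtain rfl : Vhat = fun S ω => empVar S fun s => wt s * ((itthat n n1 Z (obs Z Y0 Y1) s ω -
      empMean S fun s' => wt s' * itthat n n1 Z (obs Z Y0 Y1) s' ω) ^ 2 -
        vrob n n1 Z (obs Z Y0 Y1) s ω) := by
    ext S ω; simp only [hVhat, hphihat]; rfl
  exact ⟨tendstoInMeasure_empVar_phihat hmeas hZ01 hY hA1 hA2 hw hE1 hE2,
    le_sub_sq_of_tendsto_empMean (memLp_phi hmeas hZ01 hY hA1 hw) hE1 hE2 hVlim⟩

/-- Theorem 1, conservative variance estimator for the EB estimator. -/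
theorem statement1
    {Ω : Type*} [MeasurableSpace Ω] (P : Measure Ω) [IsProbabilityMeasure P]
    (n n1 : ℕ → ℕ) (Z Y0 Y1 : ℕ → ℕ → Ω → ℝ)
    (hmeas : ∀ s i, Measurable (Z s i) ∧ Measurable (Y0 s i) ∧ Measurable (Y1 s i))
    (hZ01 : ∀ s i ω, Z s i ω = 0 ∨ Z s i ω = 1)
    (hbd : ∃ C : ℝ, ∀ s i ω, |Y0 s i ω| ≤ C ∧ |Y1 s i ω| ≤ C)
    (hA1 : Assumption1 P n n1 Z)
    (hA2 : Assumption2 P (fun s i ω => (Y0 s i ω, Y1 s i ω)) Z)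
    (wt : ℕ → ℝ)
    (hw0 : ∀ s, 0 ≤ wt s)
    (hwsum : ∀ S : ℕ, ∑ s ∈ Finset.range S, wt s = (S : ℝ))
    (hwbd : ∃ N : ℝ, 0 < N ∧ ∀ s, wt s ≤ N)
    (ITTpop : ℕ → ℝ)
    (hITTpop : ∀ S, ITTpop S = (∑ s ∈ Finset.range S, wt s * popEff P Y0 Y1 s) / (S : ℝ))
    (sigma2ITT : ℕ → ℝ)
    (hsigma2 : ∀ S, sigma2ITT S =
      (∑ s ∈ Finset.range S, wt s * (popEff P Y0 Y1 s - ITTpop S) ^ 2) / (S : ℝ))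
    (ITThatAgg : ℕ → Ω → ℝ)
    (hAgg : ∀ S ω, ITThatAgg S ω =
      (∑ s ∈ Finset.range S, wt s * itthat n n1 Z (obs Z Y0 Y1) s ω) / (S : ℝ))
    (phi1 : ℕ → ℕ → Ω → ℝ)
    (hphi1 : ∀ S s ω, phi1 S s ω = wt s *
      ((itthat n n1 Z (obs Z Y0 Y1) s ω - ITTpop S) ^ 2 - vrob n n1 Z (obs Z Y0 Y1) s ω))
    (hLyapITT : Lyapunov P (fun _ s ω => wt s * itthat n n1 Z (obs Z Y0 Y1) s ω))
    (hLyapPhi : Lyapunov P phi1)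
    (hITTlim : ∃ L : ℝ, Tendsto ITTpop atTop (nhds L))
    (phihat : ℕ → ℕ → Ω → ℝ)
    (hphihat : ∀ S s ω, phihat S s ω = wt s *
      ((itthat n n1 Z (obs Z Y0 Y1) s ω - ITThatAgg S ω) ^ 2 - vrob n n1 Z (obs Z Y0 Y1) s ω))
    (Vhat : ℕ → Ω → ℝ)
    (hVhat : ∀ S ω, Vhat S ω = (∑ s ∈ Finset.range S,
      (phihat S s ω - (∑ s' ∈ Finset.range S, phihat S s' ω) / (S : ℝ)) ^ 2) / (S : ℝ))
    (L1 L2 V : ℝ)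
    (hE1 : Tendsto
      (fun S => (∑ s ∈ Finset.range S, ∫ ω, phi1 S s ω ∂P) / (S : ℝ)) atTop (nhds L1))
    (hE2 : Tendsto
      (fun S => (∑ s ∈ Finset.range S, ∫ ω, (phi1 S s ω) ^ 2 ∂P) / (S : ℝ)) atTop (nhds L2))
    (hVlim : Tendsto
      (fun S => (∑ s ∈ Finset.range S, variance (phi1 S s) P) / (S : ℝ)) atTop (nhds V)) :
    TendstoInMeasure P Vhat atTop (fun _ => L2 - L1 ^ 2) ∧ V ≤ L2 - L1 ^ 2 :=
  statement1_general P n n1 Z Y0 Y1 hmeas hZ01 hbd hA1 hA2 wt hw0 hwbd ITTpop hITTpop ITThatAgg hAgg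
    phi1 hphi1 phihat hphihat Vhat hVhat L1 L2 V hE1 hE2 hVlim

end MultiSite
end

section
/- Under Assumptions 1 and 2, for every site s and every mediator coordinate k, Cov(ITT̂_{M_k,s}, ITT̂_s) = Cov(M^r_{k,s}(0), Y^r_s(0))/n_{0s} + Cov(M^r_{k,s}(1), Y^r_s(1))/n_{1s}: the finite-population covariance correction term −Cov(M^r_{k,s}(1) − M^r_{k,s}(0), Y^r_s(1) − Y^r_s(0))/n_s arising conditionally on the potential outcomes cancels exactly with the covariance of the conditional means. -/
open MeasureTheory ProbabilityTheory Filter Finset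
open scoped ENNReal NNReal

namespace MultiSite

variable {Ω : Type*} [MeasurableSpace Ω]

/-!
Because exactly `n₁` of the `n` units are treated, each arm mean of the observed variable is
almost surely the population mean of the corresponding potential variable plus a weighted sum
`∑ᵢ φ(Zᵢ) (Xᵢ - E X)` of centered potential variables, and the constants drop out of the
covariance. Since the assignment is independent of the i.i.d. unit vectors, the covariance of two
such sums is `∑ᵢ E[φ(Zᵢ) ψ(Zᵢ)] · Cov(X, Y)`: the cross-unit terms vanish by centering. As
`Zᵢ ∈ {0, 1}`, `∑ᵢ g(Zᵢ) = n₁ g(1) + n₀ g(0)`, so the treated-treated and control-control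
weights sum to `1 / n₁` and `1 / n₀`, while the mixed weights vanish because `Zᵢ (1 - Zᵢ) = 0`.
-/

lemma covar_eq_covariance {P : Measure Ω} (X Y : Ω → ℝ) : covar P X Y = cov[X, Y; P] := rfl

lemma covariance_congr_ae {P : Measure Ω} {X X' Y Y' : Ω → ℝ} (hX : X =ᵐ[P] X')
    (hY : Y =ᵐ[P] Y') : cov[X, Y; P] = cov[X', Y'; P] := by
  rw [covariance, covariance, integral_congr_ae hX, integral_congr_ae hY]
  exact integral_congr_ae (by filter_upwards [hX, hY] with ω hXω hYω; rw [hXω, hYω])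

lemma sum_mul_div_eq_add_sum {ι : Type*} (s : Finset ι) {w : ι → ℝ} {m : ℝ}
    (hw : ∑ i ∈ s, w i = m) (hm : m ≠ 0) (v : ι → ℝ) (c : ℝ) :
    (∑ i ∈ s, w i * v i) / m = c + ∑ i ∈ s, w i / m * (v i - c) := by
  simp only [mul_sub, sum_sub_distrib, div_mul_eq_mul_div, ← sum_div, ← sum_mul, hw]
  field_simp
  ring

def IsAssignment (N K1 : ℕ) (a : ℕ → ℝ) : Prop :=
  (∀ i ∈ range N, a i = 0 ∨ a i = 1) ∧ ∑ i ∈ range N, a i = K1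

namespace IsAssignment

variable {N K1 : ℕ} {a : ℕ → ℝ}

lemma sum_one_sub (ha : IsAssignment N K1 a) : ∑ i ∈ range N, (1 - a i) = N - K1 := by
  simp [sum_sub_distrib, ha.2]

lemma sum_comp (ha : IsAssignment N K1 a) (g : ℝ → ℝ) :
    ∑ i ∈ range N, g (a i) = K1 * g 1 + (N - K1) * g 0 := by
  have hg : ∀ i ∈ range N, g (a i) = a i * g 1 + (1 - a i) * g 0 := fun i hi => by
    rcases ha.1 i hi with h | h <;> simp [h]
  rw [sum_congr rfl hg, sum_add_distrib, ← sum_mul, ← sum_mul, ha.2, ha.sum_one_sub]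

end IsAssignment

section Assignment

variable {P : Measure Ω} {N K1 : ℕ} {A : ℕ → Ω → ℝ}

lemma ae_isAssignment_of_uniform [IsProbabilityMeasure P] (hAm : ∀ i, Measurable (A i))
    (hK1 : K1 ≤ N)
    (hunif : ∀ z : ℕ → ℝ, (∀ i ∈ range N, z i = 0 ∨ z i = 1) → ∑ i ∈ range N, z i = K1 →
      P {ω | ∀ i ∈ range N, A i ω = z i} = ((N.choose K1 : ℝ≥0∞))⁻¹) :
    ∀ᵐ ω ∂P, IsAssignment N K1 (fun i => A i ω) := by
  classical
  set 𝒯 := (range N).powersetCard K1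
  let z : Finset ℕ → ℕ → ℝ := fun T i => if i ∈ T then 1 else 0
  let E : Finset ℕ → Set Ω := fun T => {ω | ∀ i ∈ range N, A i ω = z T i}
  have hz : ∀ T ∈ 𝒯, IsAssignment N K1 (z T) := by
    intro T hT
    obtain ⟨hTN, hTcard⟩ := mem_powersetCard.1 hT
    refine ⟨fun i _ => by by_cases h : i ∈ T <;> simp [z, h], ?_⟩
    rw [sum_boole, filter_mem_eq_inter, inter_eq_right.2 hTN, hTcard]
  have hE : ∀ T, MeasurableSet (E T) := fun T => by
    have : E T = ⋂ i ∈ range N, A i ⁻¹' {z T i} := by ext; simp [E]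
    exact this ▸ Finset.measurableSet_biInter _ fun i _ => hAm i (measurableSet_singleton _)
  have hdisj : Set.PairwiseDisjoint ↑𝒯 E := by
    intro T hT T' hT' hne
    refine Set.disjoint_left.2 fun ω hω hω' => hne ?_
    ext i
    by_cases hi : i ∈ range N
    · have := (hω i hi).symm.trans (hω' i hi)
      by_cases h : i ∈ T <;> by_cases h' : i ∈ T' <;> simp_all [z]
    · exact iff_of_false (fun h => hi (mem_powersetCard.1 hT |>.1 h))
        (fun h => hi (mem_powersetCard.1 hT' |>.1 h))
  have hunion : P (⋃ T ∈ 𝒯, E T) = P Set.univ := by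
    rw [measure_biUnion_finset hdisj fun T _ => hE T,
      sum_congr rfl fun T hT => hunif _ (hz T hT).1 (hz T hT).2, sum_const, card_powersetCard,
      card_range, nsmul_eq_mul, measure_univ]
    exact ENNReal.mul_inv_cancel (by exact_mod_cast (Nat.choose_pos hK1).ne')
      (ENNReal.natCast_ne_top _)
  filter_upwards [(ae_mem_iff_measure_eq
    (Finset.measurableSet_biUnion 𝒯 fun T _ => hE T).nullMeasurableSet).2 hunion] with ω hω
  obtain ⟨T, hT, hωT⟩ := Set.mem_iUnion₂.1 hω
  refine ⟨fun i hi => by simpa only [hωT i hi] using (hz T hT).1 i hi, ?_⟩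
  rw [sum_congr rfl hωT]
  exact (hz T hT).2

lemma memLp_top_comp_of_ae_isAssignment (hA : ∀ᵐ ω ∂P, IsAssignment N K1 (fun i => A i ω))
    {i : ℕ} (hi : i ∈ range N) (hAi : Measurable (A i)) {g : ℝ → ℝ} (hg : Measurable g) :
    MemLp (fun ω => g (A i ω)) ∞ P :=
  memLp_top_of_bound (hg.comp hAi).aestronglyMeasurable (|g 0| + |g 1|) <| hA.mono fun ω hω => by
    rcases hω.1 i hi with h | h <;> simp [h]

lemma sum_integral_comp_of_ae_isAssignment [IsProbabilityMeasure P]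
    (hA : ∀ᵐ ω ∂P, IsAssignment N K1 (fun i => A i ω))
    (hAm : ∀ i, Measurable (A i)) {g : ℝ → ℝ} (hg : Measurable g) :
    ∑ i ∈ range N, ∫ ω, g (A i ω) ∂P = K1 * g 1 + (N - K1) * g 0 := by
  rw [← integral_finsetSum _ fun i hi =>
      (memLp_top_comp_of_ae_isAssignment hA hi (hAm i) hg).integrable le_top,
    integral_congr_ae (hA.mono fun ω hω => hω.sum_comp g), integral_const, probReal_univ,
    one_smul]

end Assignment

section UnitSums

variable {β : Type*} [MeasurableSpace β] {P : Measure Ω} {N K1 : ℕ} {A : ℕ → Ω → ℝ}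
  {W : ℕ → Ω → β}

lemma integral_comp_mul_comp_of_indepFun (hAm : ∀ i, Measurable (A i))
    (hWm : ∀ i, Measurable (W i)) (hWA : IndepFun (fun ω i => W i ω) (fun ω i => A i ω) P)
    {f : (ℕ → ℝ) → ℝ} {g : (ℕ → β) → ℝ} (hf : Measurable f) (hg : Measurable g) :
    ∫ ω, f (fun i => A i ω) * g (fun i => W i ω) ∂P
      = (∫ ω, f (fun i => A i ω) ∂P) * ∫ ω, g (fun i => W i ω) ∂P :=
  (hWA.comp hg hf).symm.integral_fun_mul_eq_mul_integral
    (hf.comp (measurable_pi_lambda _ hAm)).aestronglyMeasurable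
    (hg.comp (measurable_pi_lambda _ hWm)).aestronglyMeasurable

lemma covariance_mul_mul_of_indepFun (hAm : ∀ i, Measurable (A i))
    (hWm : ∀ i, Measurable (W i)) (hWA : IndepFun (fun ω i => W i ω) (fun ω i => A i ω) P)
    {φ ψ : ℝ → ℝ} {ξ η : β → ℝ} (hφ : Measurable φ) (hψ : Measurable ψ) (hξ : Measurable ξ)
    (hη : Measurable η) {i j : ℕ} (hξ0 : ∫ ω, ξ (W i ω) ∂P = 0)
    (hη0 : ∫ ω, η (W j ω) ∂P = 0) :
    cov[fun ω => φ (A i ω) * ξ (W i ω), fun ω => ψ (A j ω) * η (W j ω); P]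
      = (∫ ω, φ (A i ω) * ψ (A j ω) ∂P) * ∫ ω, ξ (W i ω) * η (W j ω) ∂P := by
  have hi := integral_comp_mul_comp_of_indepFun hAm hWm hWA
    (hφ.comp (measurable_pi_apply i)) (hξ.comp (measurable_pi_apply i))
  have hj := integral_comp_mul_comp_of_indepFun hAm hWm hWA
    (hψ.comp (measurable_pi_apply j)) (hη.comp (measurable_pi_apply j))
  have hij := integral_comp_mul_comp_of_indepFun hAm hWm hWA
    ((hφ.comp (measurable_pi_apply i)).mul (hψ.comp (measurable_pi_apply j)))
    ((hξ.comp (measurable_pi_apply i)).mul (hη.comp (measurable_pi_apply j)))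
  simp only [Function.comp_apply, Pi.mul_apply, hξ0, hη0, mul_zero] at hi hj hij
  rw [covariance, hi, hj, ← hij]
  simp only [sub_zero]
  exact integral_congr_ae (.of_forall fun ω => by ring)

variable [IsProbabilityMeasure P]

lemma integral_centered_eq_zero (hWid : ∀ i, IdentDistrib (W i) (W 0) P P) {ξ : β → ℝ}
    (hξ : Measurable ξ) (hξi : Integrable (fun ω => ξ (W 0 ω)) P) (i : ℕ) :
    ∫ ω, (ξ (W i ω) - ∫ ω', ξ (W 0 ω') ∂P) ∂P = 0 := by
  have hid : IdentDistrib (fun ω => ξ (W i ω)) (fun ω => ξ (W 0 ω)) P P := (hWid i).comp hξ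
  rw [integral_sub (hid.integrable_iff.2 hξi) (integrable_const _), integral_const,
    probReal_univ, one_smul, hid.integral_eq, sub_self]

lemma integral_centered_mul_centered (hWm : ∀ i, Measurable (W i))
    (hWW : Pairwise fun i j => IndepFun (W i) (W j) P)
    (hWid : ∀ i, IdentDistrib (W i) (W 0) P P) {ξ η : β → ℝ} (hξ : Measurable ξ)
    (hη : Measurable η) (hξi : Integrable (fun ω => ξ (W 0 ω)) P) (i j : ℕ) :
    ∫ ω, (ξ (W i ω) - ∫ ω', ξ (W 0 ω') ∂P) * (η (W j ω) - ∫ ω', η (W 0 ω') ∂P) ∂P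
      = if i = j then cov[fun ω => ξ (W 0 ω), fun ω => η (W 0 ω); P] else 0 := by
  split_ifs with hij
  · subst hij
    exact ((hWid i).comp ((hξ.sub_const _).mul (hη.sub_const _))).integral_eq
  · have hind : IndepFun (fun ω => ξ (W i ω) - ∫ ω', ξ (W 0 ω') ∂P)
        (fun ω => η (W j ω) - ∫ ω', η (W 0 ω') ∂P) P :=
      (hWW hij).comp (hξ.sub_const _) (hη.sub_const _)
    rw [hind.integral_fun_mul_eq_mul_integral
      ((hξ.sub_const _).comp (hWm i)).aestronglyMeasurable
      ((hη.sub_const _).comp (hWm j)).aestronglyMeasurable,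
      integral_centered_eq_zero hWid hξ hξi, zero_mul]

lemma memLp_two_mul_centered (hWid : ∀ i, IdentDistrib (W i) (W 0) P P) {φ : ℝ → ℝ}
    {ξ : β → ℝ} (hξ : Measurable ξ) {i : ℕ} (hφA : MemLp (fun ω => φ (A i ω)) ∞ P)
    (hξL : MemLp (fun ω => ξ (W 0 ω)) 2 P) (c : ℝ) :
    MemLp (fun ω => φ (A i ω) * (ξ (W i ω) - c)) 2 P :=
  ((((hWid i).comp hξ).memLp_iff.2 hξL).sub (memLp_const c)).mul' hφA

lemma covariance_sum_mul_centered (hAm : ∀ i, Measurable (A i))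
    (hWm : ∀ i, Measurable (W i)) (hWA : IndepFun (fun ω i => W i ω) (fun ω i => A i ω) P)
    (hWW : Pairwise fun i j => IndepFun (W i) (W j) P)
    (hWid : ∀ i, IdentDistrib (W i) (W 0) P P) {φ ψ : ℝ → ℝ} {ξ η : β → ℝ}
    (hφ : Measurable φ) (hψ : Measurable ψ) (hξ : Measurable ξ) (hη : Measurable η)
    (s : Finset ℕ) (hφA : ∀ i ∈ s, MemLp (fun ω => φ (A i ω)) ∞ P)
    (hψA : ∀ i ∈ s, MemLp (fun ω => ψ (A i ω)) ∞ P) (hξL : MemLp (fun ω => ξ (W 0 ω)) 2 P)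
    (hηL : MemLp (fun ω => η (W 0 ω)) 2 P) :
    cov[fun ω => ∑ i ∈ s, φ (A i ω) * (ξ (W i ω) - ∫ ω', ξ (W 0 ω') ∂P),
        fun ω => ∑ j ∈ s, ψ (A j ω) * (η (W j ω) - ∫ ω', η (W 0 ω') ∂P); P]
      = (∑ i ∈ s, ∫ ω, φ (A i ω) * ψ (A i ω) ∂P)
          * cov[fun ω => ξ (W 0 ω), fun ω => η (W 0 ω); P] := by
  rw [covariance_fun_sum_fun_sum' (fun i hi => memLp_two_mul_centered hWid hξ (hφA i hi) hξL _)
    (fun j hj => memLp_two_mul_centered hWid hη (hψA j hj) hηL _), sum_mul]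
  refine sum_congr rfl fun i hi => ?_
  have hpair := fun j => covariance_mul_mul_of_indepFun (i := i) (j := j) hAm hWm hWA hφ hψ
    (hξ.sub_const (∫ ω', ξ (W 0 ω') ∂P)) (hη.sub_const (∫ ω', η (W 0 ω') ∂P))
    (integral_centered_eq_zero hWid hξ (hξL.integrable one_le_two) i)
    (integral_centered_eq_zero hWid hη (hηL.integrable one_le_two) j)
  simp only [hpair, integral_centered_mul_centered hWm hWW hWid hξ hη
    (hξL.integrable one_le_two), mul_ite, mul_zero, sum_ite_eq, if_pos hi]

lemma memLp_sum_mul_centered (hAm : ∀ i, Measurable (A i))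
    (hA : ∀ᵐ ω ∂P, IsAssignment N K1 (fun i => A i ω)) (hWid : ∀ i, IdentDistrib (W i) (W 0) P P)
    {φ : ℝ → ℝ} {ξ : β → ℝ} (hφ : Measurable φ) (hξ : Measurable ξ)
    (hξL : MemLp (fun ω => ξ (W 0 ω)) 2 P) :
    MemLp (fun ω => ∑ i ∈ range N, φ (A i ω) * (ξ (W i ω) - ∫ ω', ξ (W 0 ω') ∂P)) 2 P :=
  memLp_finsetSum _ fun i hi => memLp_two_mul_centered hWid hξ
    (memLp_top_comp_of_ae_isAssignment hA hi (hAm i) hφ) hξL _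

lemma covariance_sum_mul_centered_of_ae_isAssignment (hAm : ∀ i, Measurable (A i))
    (hWm : ∀ i, Measurable (W i)) (hA : ∀ᵐ ω ∂P, IsAssignment N K1 (fun i => A i ω))
    (hWA : IndepFun (fun ω i => W i ω) (fun ω i => A i ω) P)
    (hWW : Pairwise fun i j => IndepFun (W i) (W j) P)
    (hWid : ∀ i, IdentDistrib (W i) (W 0) P P) {φ ψ : ℝ → ℝ} {ξ η : β → ℝ}
    (hφ : Measurable φ) (hψ : Measurable ψ) (hξ : Measurable ξ) (hη : Measurable η)
    (hξL : MemLp (fun ω => ξ (W 0 ω)) 2 P) (hηL : MemLp (fun ω => η (W 0 ω)) 2 P) :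
    cov[fun ω => ∑ i ∈ range N, φ (A i ω) * (ξ (W i ω) - ∫ ω', ξ (W 0 ω') ∂P),
        fun ω => ∑ j ∈ range N, ψ (A j ω) * (η (W j ω) - ∫ ω', η (W 0 ω') ∂P); P]
      = (K1 * (φ 1 * ψ 1) + (N - K1) * (φ 0 * ψ 0))
          * cov[fun ω => ξ (W 0 ω), fun ω => η (W 0 ω); P] := by
  rw [← sum_integral_comp_of_ae_isAssignment hA hAm (g := fun a => φ a * ψ a) (hφ.mul hψ)]
  exact covariance_sum_mul_centered hAm hWm hWA hWW hWid hφ hψ hξ hη _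
    (fun i hi => memLp_top_comp_of_ae_isAssignment hA hi (hAm i) hφ)
    (fun i hi => memLp_top_comp_of_ae_isAssignment hA hi (hAm i) hψ) hξL hηL

lemma covariance_diffInMeans (hAm : ∀ i, Measurable (A i)) (hWm : ∀ i, Measurable (W i))
    (hA : ∀ᵐ ω ∂P, IsAssignment N K1 (fun i => A i ω)) (hK1 : 0 < K1) (hK1N : K1 < N)
    (hWA : IndepFun (fun ω i => W i ω) (fun ω i => A i ω) P)
    (hWW : Pairwise fun i j => IndepFun (W i) (W j) P)
    (hWid : ∀ i, IdentDistrib (W i) (W 0) P P) {x1 x0 y1 y0 : β → ℝ}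
    (hx1 : Measurable x1) (hx0 : Measurable x0) (hy1 : Measurable y1) (hy0 : Measurable y0)
    (hx1L : MemLp (fun ω => x1 (W 0 ω)) 2 P) (hx0L : MemLp (fun ω => x0 (W 0 ω)) 2 P)
    (hy1L : MemLp (fun ω => y1 (W 0 ω)) 2 P) (hy0L : MemLp (fun ω => y0 (W 0 ω)) 2 P) :
    cov[fun ω => (∑ i ∈ range N, A i ω * x1 (W i ω)) / K1
          - (∑ i ∈ range N, (1 - A i ω) * x0 (W i ω)) / ((N - K1 : ℕ) : ℝ),
        fun ω => (∑ i ∈ range N, A i ω * y1 (W i ω)) / K1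
          - (∑ i ∈ range N, (1 - A i ω) * y0 (W i ω)) / ((N - K1 : ℕ) : ℝ); P]
      = cov[fun ω => x0 (W 0 ω), fun ω => y0 (W 0 ω); P] / ((N - K1 : ℕ) : ℝ)
        + cov[fun ω => x1 (W 0 ω), fun ω => y1 (W 0 ω); P] / K1 := by
  set K0 : ℝ := ((N - K1 : ℕ) : ℝ) with hK0
  have hK0N : K0 = N - K1 := by rw [hK0, Nat.cast_sub hK1N.le]
  have hK1ne : (K1 : ℝ) ≠ 0 := by positivity
  have hK0ne : K0 ≠ 0 := by rw [hK0]; exact_mod_cast (Nat.sub_pos_of_lt hK1N).ne'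
  set φ1 : ℝ → ℝ := fun a => a / K1 with hφ1
  set φ0 : ℝ → ℝ := fun a => (1 - a) / K0 with hφ0
  have hφ1m : Measurable φ1 := measurable_id.div_const _
  have hφ0m : Measurable φ0 := (measurable_const.sub measurable_id).div_const _
  have hshift : ∀ ξ1 ξ0 : β → ℝ, (fun ω => (∑ i ∈ range N, A i ω * ξ1 (W i ω)) / K1
      - (∑ i ∈ range N, (1 - A i ω) * ξ0 (W i ω)) / K0) =ᵐ[P] fun ω =>
        (∫ ω', ξ1 (W 0 ω') ∂P - ∫ ω', ξ0 (W 0 ω') ∂P)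
          + (∑ i ∈ range N, φ1 (A i ω) * (ξ1 (W i ω) - ∫ ω', ξ1 (W 0 ω') ∂P)
            - ∑ i ∈ range N, φ0 (A i ω) * (ξ0 (W i ω) - ∫ ω', ξ0 (W 0 ω') ∂P)) := by
    intro ξ1 ξ0
    filter_upwards [hA] with ω hω
    rw [sum_mul_div_eq_add_sum _ hω.2 hK1ne _ (∫ ω', ξ1 (W 0 ω') ∂P),
      sum_mul_div_eq_add_sum _ (hω.sum_one_sub.trans hK0N.symm) hK0ne _ (∫ ω', ξ0 (W 0 ω') ∂P)]
    ring
  have hmem := fun {φ ξ} => memLp_sum_mul_centered (φ := φ) (ξ := ξ) hAm hA hWid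
  have hcov := fun {φ ψ ξ η} => covariance_sum_mul_centered_of_ae_isAssignment
    (φ := φ) (ψ := ψ) (ξ := ξ) (η := η) hAm hWm hA hWA hWW hWid
  rw [covariance_congr_ae (hshift x1 x0) (hshift y1 y0), covariance_const_add_left,
    covariance_const_add_right, covariance_fun_sub_fun_sub (hmem hφ1m hx1 hx1L)
      (hmem hφ0m hx0 hx0L) (hmem hφ1m hy1 hy1L) (hmem hφ0m hy0 hy0L),
    hcov hφ1m hφ1m hx1 hy1 hx1L hy1L, hcov hφ1m hφ0m hx1 hy0 hx1L hy0L,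
    hcov hφ0m hφ1m hx0 hy1 hx0L hy1L, hcov hφ0m hφ0m hx0 hy0 hx0L hy0L, ← hK0N]
  · simp only [hφ1, hφ0]
    field_simp
    ring
  · exact ((hmem hφ1m hy1 hy1L).sub (hmem hφ0m hy0 hy0L)).integrable one_le_two
  · exact ((hmem hφ1m hx1 hx1L).sub (hmem hφ0m hx0 hx0L)).integrable one_le_two

end UnitSums

lemma itthat_obs_ae_eq {P : Measure Ω} {n n1 : ℕ → ℕ} {Z X0 X1 : ℕ → ℕ → Ω → ℝ} {s : ℕ}
    (hZ : ∀ᵐ ω ∂P, IsAssignment (n s) (n1 s) (fun i => Z s i ω)) :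
    itthat n n1 Z (obs Z X0 X1) s =ᵐ[P] fun ω =>
      (∑ i ∈ range (n s), Z s i ω * X1 s i ω) / n1 s
        - (∑ i ∈ range (n s), (1 - Z s i ω) * X0 s i ω) / ((n s - n1 s : ℕ) : ℝ) := by
  filter_upwards [hZ] with ω hω
  simp only [itthat, mean1, mean0, obs]
  congr 2 <;> refine sum_congr rfl fun i hi => ?_ <;> rcases hω.1 i hi with h | h <;> simp [h]

theorem statement10_general
    {Ω : Type*} [MeasurableSpace Ω] (P : Measure Ω) [IsProbabilityMeasure P]
    (K : ℕ) (n n1 : ℕ → ℕ) (Z Y0 Y1 : ℕ → ℕ → Ω → ℝ) (M0 M1 : ℕ → ℕ → Ω → Fin K → ℝ)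
    (hmeas : ∀ s i, Measurable (Z s i) ∧ Measurable (Y0 s i) ∧ Measurable (Y1 s i)
      ∧ Measurable (M0 s i) ∧ Measurable (M1 s i))
    (hbd : ∃ C : ℝ, ∀ s i ω, |Y0 s i ω| ≤ C ∧ |Y1 s i ω| ≤ C
      ∧ ∀ k, |M0 s i ω k| ≤ C ∧ |M1 s i ω k| ≤ C)
    (hA1 : Assumption1 P n n1 Z)
    (hA2 : Assumption2 P (fun s i ω => (Y0 s i ω, Y1 s i ω, M0 s i ω, M1 s i ω)) Z)
    (Mk0 Mk1 : Fin K → ℕ → ℕ → Ω → ℝ)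
    (hMk0 : ∀ k s i ω, Mk0 k s i ω = M0 s i ω k)
    (hMk1 : ∀ k s i ω, Mk1 k s i ω = M1 s i ω k)
    :
    ∀ (s : ℕ) (k : Fin K),
      covar P (itthat n n1 Z (obs Z (Mk0 k) (Mk1 k)) s) (itthat n n1 Z (obs Z Y0 Y1) s)
        = covar P (fun ω => M0 s 0 ω k) (fun ω => Y0 s 0 ω) / ((n s - n1 s : ℕ) : ℝ)
          + covar P (fun ω => M1 s 0 ω k) (fun ω => Y1 s 0 ω) / (n1 s : ℝ) := by
  intro s k
  obtain rfl : Mk0 = fun k s i ω => M0 s i ω k := by ext; exact hMk0 ..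
  obtain rfl : Mk1 = fun k s i ω => M1 s i ω k := by ext; exact hMk1 ..
  obtain ⟨hK1, hK1N, hunif⟩ := hA1 s
  obtain ⟨C, hC⟩ := hbd
  have hZ := ae_isAssignment_of_uniform (fun i => (hmeas s i).1) (by omega) hunif
  have hWm : ∀ i, Measurable fun ω => (Y0 s i ω, Y1 s i ω, M0 s i ω, M1 s i ω) := fun i => by
    obtain ⟨-, hY0, hY1, hM0, hM1⟩ := hmeas s i
    exact hY0.prodMk (hY1.prodMk (hM0.prodMk hM1))
  have hL2 : ∀ {f : Ω → ℝ}, Measurable f → (∀ ω, |f ω| ≤ C) → MemLp f 2 P := fun hf hfC =>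
    .of_bound hf.aestronglyMeasurable C (.of_forall hfC)
  simp only [covar_eq_covariance]
  rw [covariance_congr_ae (itthat_obs_ae_eq hZ) (itthat_obs_ae_eq hZ)]
  exact covariance_diffInMeans (fun i => (hmeas s i).1) hWm hZ (by omega) (by omega)
    (hA2.2.2.1 s) (fun i j hij => (hA2.1 s).indepFun hij) (fun i => hA2.2.1 s i 0)
    (measurable_pi_iff.1 measurable_snd.snd.snd k) (measurable_pi_iff.1 measurable_snd.snd.fst k)
    measurable_snd.fst measurable_fst
    (hL2 (measurable_pi_iff.1 (hmeas s 0).2.2.2.2 k) fun ω => ((hC s 0 ω).2.2 k).2)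
    (hL2 (measurable_pi_iff.1 (hmeas s 0).2.2.2.1 k) fun ω => ((hC s 0 ω).2.2 k).1)
    (hL2 (hmeas s 0).2.2.1 fun ω => (hC s 0 ω).2.1)
    (hL2 (hmeas s 0).2.1 fun ω => (hC s 0 ω).1)

/-- the covariance between the mediator-ITT and outcome-ITT estimators of a
site equals the sum of the arm-specific population covariances divided by arm sizes. -/
theorem statement10
    {Ω : Type*} [MeasurableSpace Ω] (P : Measure Ω) [IsProbabilityMeasure P]
    (K : ℕ) (n n1 : ℕ → ℕ) (Z Y0 Y1 : ℕ → ℕ → Ω → ℝ) (M0 M1 : ℕ → ℕ → Ω → Fin K → ℝ)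
    (hmeas : ∀ s i, Measurable (Z s i) ∧ Measurable (Y0 s i) ∧ Measurable (Y1 s i)
      ∧ Measurable (M0 s i) ∧ Measurable (M1 s i))
    (hZ01 : ∀ s i ω, Z s i ω = 0 ∨ Z s i ω = 1)
    (hbd : ∃ C : ℝ, ∀ s i ω, |Y0 s i ω| ≤ C ∧ |Y1 s i ω| ≤ C
      ∧ ∀ k, |M0 s i ω k| ≤ C ∧ |M1 s i ω k| ≤ C)
    (hA1 : Assumption1 P n n1 Z)
    (hA2 : Assumption2 P (fun s i ω => (Y0 s i ω, Y1 s i ω, M0 s i ω, M1 s i ω)) Z)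
    (Mk0 Mk1 : Fin K → ℕ → ℕ → Ω → ℝ)
    (hMk0 : ∀ k s i ω, Mk0 k s i ω = M0 s i ω k)
    (hMk1 : ∀ k s i ω, Mk1 k s i ω = M1 s i ω k)
    :
    ∀ (s : ℕ) (k : Fin K),
      covar P (itthat n n1 Z (obs Z (Mk0 k) (Mk1 k)) s) (itthat n n1 Z (obs Z Y0 Y1) s)
        = covar P (fun ω => M0 s 0 ω k) (fun ω => Y0 s 0 ω) / ((n s - n1 s : ℕ) : ℝ)
          + covar P (fun ω => M1 s 0 ω k) (fun ω => Y1 s 0 ω) / (n1 s : ℝ) :=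
  statement10_general P K n n1 Z Y0 Y1 M0 M1 hmeas hbd hA1 hA2 Mk0 Mk1 hMk0 hMk1

end MultiSite
end

section
/- (Theorem 3.) Suppose FS > 0 and FS_s > 0 for all s. Then the weighted covariance between site-level LATEs and a site-level scalar characteristic X satisfies σ[LATE, X] = (σ²[X]/FS)(β^ITT_X − LATE · β^FS_X), where σ[LATE, X] = Σ_{s=1}^S (w_s FS_s/FS)(LATE_s − LATE)X_s. In particular, the sign of the correlation between the LATEs and X equals the sign of β^ITT_X − LATE · β^FS_X. -/
open MeasureTheory ProbabilityTheory Filter Finset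
open scoped ENNReal NNReal

namespace MultiSite

variable {Ω : Type*} [MeasurableSpace Ω]

/-!
With the residuals `r s = ITT_s - LATE * FS_s`, the definition of `LATE` says exactly that
`∑ w s * r s = 0`. Multiplying out, the LATE-weighted covariance is `(∑ w s * X s * r s) / FS`;
because the `r s` have weighted sum zero, `X` may be centred at any constant, and the numerators
of the two regression slopes combine to `∑ w s * (X s - muX) * r s`.
-/

section WeightedSums

variable {ι : Type*} (t : Finset ι) (w : ι → ℝ)

theorem sum_mul_sub_mul_eq_zero_of_eq_div {a f : ι → ℝ} {L : ℝ}
    (hf : ∑ i ∈ t, w i * f i ≠ 0) (hL : L = (∑ i ∈ t, w i * a i) / ∑ i ∈ t, w i * f i) :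
    ∑ i ∈ t, w i * (a i - L * f i) = 0 := by
  have hsplit : ∀ i, w i * (a i - L * f i) = w i * a i - L * (w i * f i) := by
    intro i; ring
  rw [sum_congr rfl fun i _ => hsplit i, sum_sub_distrib, ← mul_sum, hL, div_mul_cancel₀ _ hf,
    sub_self]

theorem sum_mul_sub_const_mul_of_sum_mul_eq_zero {x y : ι → ℝ} (c : ℝ)
    (hy : ∑ i ∈ t, w i * y i = 0) :
    ∑ i ∈ t, w i * ((x i - c) * y i) = ∑ i ∈ t, w i * (x i * y i) := by
  have hsplit : ∀ i, w i * ((x i - c) * y i) = w i * (x i * y i) - c * (w i * y i) := by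
    intro i; ring
  simp only [hsplit, sum_sub_distrib, ← mul_sum, hy, mul_zero, sub_zero]

theorem sum_mul_div_mul_div_sub_mul (a f x : ι → ℝ) (L F : ℝ) (hf : ∀ i ∈ t, f i ≠ 0) :
    ∑ i ∈ t, (w i * f i / F) * ((a i / f i - L) * x i)
      = (∑ i ∈ t, w i * (x i * (a i - L * f i))) / F := by
  rw [sum_div]
  refine sum_congr rfl fun i hi => ?_
  field_simp [hf i hi]

theorem sum_mul_sub_sub_mul_sum_mul_sub {z a f : ι → ℝ} {A F L : ℝ} (hA : A = L * F) :
    ∑ i ∈ t, w i * (z i * (a i - A)) - L * ∑ i ∈ t, w i * (z i * (f i - F))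
      = ∑ i ∈ t, w i * (z i * (a i - L * f i)) := by
  rw [mul_sum, ← sum_sub_distrib]
  refine sum_congr rfl fun i _ => ?_
  rw [hA]; ring

end WeightedSums

theorem statement13_general (S : ℕ)
    (w ITTs FSs X : ℕ → ℝ)
    (hFSs : ∀ s ∈ Finset.range S, 0 < FSs s)
    (FS : ℝ) (hFS : FS = ∑ s ∈ Finset.range S, w s * FSs s) (hFSpos : 0 < FS)
    (ITT : ℝ) (hITT : ITT = ∑ s ∈ Finset.range S, w s * ITTs s)
    (LATEs : ℕ → ℝ) (hLATEs : ∀ s, LATEs s = ITTs s / FSs s)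
    (LATE : ℝ) (hLATE : LATE = ITT / FS)
    (muX : ℝ)
    (s2X : ℝ) (hs2Xpos : 0 < s2X)
    (bITT : ℝ)
    (hbITT : bITT = (∑ s ∈ Finset.range S, w s * ((X s - muX) * (ITTs s - ITT))) / s2X)
    (bFS : ℝ)
    (hbFS : bFS = (∑ s ∈ Finset.range S, w s * ((X s - muX) * (FSs s - FS))) / s2X) :
    ∑ s ∈ Finset.range S, (w s * FSs s / FS) * ((LATEs s - LATE) * X s)
      = (s2X / FS) * (bITT - LATE * bFS) := by
  have hresid : ∑ s ∈ range S, w s * (ITTs s - LATE * FSs s) = 0 :=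
    sum_mul_sub_mul_eq_zero_of_eq_div _ _ (hFS ▸ hFSpos.ne') (hITT ▸ hFS ▸ hLATE)
  have hITT_eq : ITT = LATE * FS := by rw [hLATE, div_mul_cancel₀ _ hFSpos.ne']
  simp only [hLATEs]
  calc ∑ s ∈ range S, (w s * FSs s / FS) * ((ITTs s / FSs s - LATE) * X s)
      = (∑ s ∈ range S, w s * (X s * (ITTs s - LATE * FSs s))) / FS :=
        sum_mul_div_mul_div_sub_mul _ _ _ _ _ _ _ fun s hs => (hFSs s hs).ne'
    _ = (∑ s ∈ range S, w s * ((X s - muX) * (ITTs s - LATE * FSs s))) / FS := by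
        rw [sum_mul_sub_const_mul_of_sum_mul_eq_zero _ _ muX hresid]
    _ = (s2X / FS) * (bITT - LATE * bFS) := by
        rw [← sum_mul_sub_sub_mul_sum_mul_sub _ _ hITT_eq, hbITT, hbFS]
        field_simp

/-- Theorem 3: the weighted covariance between site-level LATEs and a
site-level characteristic. -/
theorem statement13 (S : ℕ) (hS : 0 < S)
    (w ITTs FSs X : ℕ → ℝ)
    (hw : ∀ s ∈ Finset.range S, 0 ≤ w s)
    (hwsum : ∑ s ∈ Finset.range S, w s = 1)
    (hFSs : ∀ s ∈ Finset.range S, 0 < FSs s)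
    (FS : ℝ) (hFS : FS = ∑ s ∈ Finset.range S, w s * FSs s) (hFSpos : 0 < FS)
    (ITT : ℝ) (hITT : ITT = ∑ s ∈ Finset.range S, w s * ITTs s)
    (LATEs : ℕ → ℝ) (hLATEs : ∀ s, LATEs s = ITTs s / FSs s)
    (LATE : ℝ) (hLATE : LATE = ITT / FS)
    (muX : ℝ) (hmuX : muX = ∑ s ∈ Finset.range S, w s * X s)
    (s2X : ℝ) (hs2X : s2X = ∑ s ∈ Finset.range S, w s * (X s - muX) ^ 2) (hs2Xpos : 0 < s2X)
    (bITT : ℝ)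
    (hbITT : bITT = (∑ s ∈ Finset.range S, w s * ((X s - muX) * (ITTs s - ITT))) / s2X)
    (bFS : ℝ)
    (hbFS : bFS = (∑ s ∈ Finset.range S, w s * ((X s - muX) * (FSs s - FS))) / s2X) :
    ∑ s ∈ Finset.range S, (w s * FSs s / FS) * ((LATEs s - LATE) * X s)
      = (s2X / FS) * (bITT - LATE * bFS) :=
  statement13_general S w ITTs FSs X hFSs FS hFS hFSpos ITT hITT LATEs hLATEs LATE hLATE muX s2X
    hs2Xpos bITT hbITT bFS hbFS

end MultiSite
end

section
/- (Theorem 4.) Suppose FS > 0, FS_s > 0 for all s, and Assumption 5 holds: Σ_s (w_s FS_s/FS) U_s LATE_s² = 0, and either λ₁ = 0 or Σ_s (w_s FS_s/FS)(LATE_s − LATE)³ = 0. Then the weighted variance of the LATEs satisfies σ²[LATE] = Σ_{s=1}^S w_s (ITT_s − FS_s · LATE)² / FS²bar, where σ²[LATE] = Σ_s (w_s FS_s/FS)(LATE_s − LATE)² and FS²bar = Σ_s w_s FS_s². -/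
/-! With weights `p s = w s * FSs s / FS`, which sum to one, `ITTs s - FSs s * LATE` equals
`FSs s * (LATEs s - LATE)`, so the numerator is `FS * ∑ p s * FSs s * (LATEs s - LATE) ^ 2`.
Substitute `FSs s = λ₀ + λ₁ * LATEs s + U s`. The least-squares residual `U` is `p`-orthogonal to
`1` and `LATEs`, and to `LATEs ^ 2` by Assumption 5, hence to `(LATEs - LATE) ^ 2`; and
`LATEs s * (LATEs s - LATE) ^ 2 = (LATEs s - LATE) ^ 3 + LATE * (LATEs s - LATE) ^ 2`, where the
cubic term is killed by the second half of Assumption 5. What remains is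
`(λ₀ + λ₁ * LATE) * σ²[LATE] = (FS2bar / FS) * σ²[LATE]`. -/

open MeasureTheory ProbabilityTheory Filter Finset
open scoped ENNReal NNReal

namespace MultiSite

variable {Ω : Type*} [MeasurableSpace Ω]

section WeightedLeastSquares

variable {ι : Type*} {s : Finset ι} {p w x y u : ι → ℝ} {m a b v : ℝ}

theorem sum_mul_sq_pos_of_sum_mul_pos (hw : ∀ i ∈ s, 0 ≤ w i)
    (h : 0 < ∑ i ∈ s, w i * x i) : 0 < ∑ i ∈ s, w i * x i ^ 2 := by
  obtain ⟨j, hj, hwxj⟩ : ∃ j ∈ s, 0 < w j * x j :=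
    exists_lt_of_sum_lt (by simpa using h)
  have hwj : 0 < w j := (hw j hj).lt_of_ne' (left_ne_zero_of_mul hwxj.ne')
  have hxj : x j ≠ 0 := right_ne_zero_of_mul hwxj.ne'
  exact sum_pos' (fun i hi => mul_nonneg (hw i hi) (sq_nonneg _)) ⟨j, hj, by positivity⟩

theorem sum_mul_residual_eq_zero (hp : ∑ i ∈ s, p i = 1) (hm : m = ∑ i ∈ s, p i * x i)
    (ha : a = ∑ i ∈ s, p i * y i - b * m) :
    ∑ i ∈ s, p i * (y i - (a + b * x i)) = 0 := by
  have hsplit : ∑ i ∈ s, p i * (y i - (a + b * x i)) =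
      ∑ i ∈ s, p i * y i - a * ∑ i ∈ s, p i - b * ∑ i ∈ s, p i * x i := by
    simp only [mul_sum, ← sum_sub_distrib]
    exact sum_congr rfl fun i _ => by ring
  rw [hsplit, hp, ← hm, ha]
  ring

theorem sum_mul_residual_mul_eq_zero (hp : ∑ i ∈ s, p i = 1) (hm : m = ∑ i ∈ s, p i * x i)
    (hv : v = ∑ i ∈ s, p i * (x i - m) ^ 2) (hv0 : v ≠ 0)
    (hb : b = (∑ i ∈ s, p i * ((x i - m) * y i)) / v)
    (ha : a = ∑ i ∈ s, p i * y i - b * m) :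
    ∑ i ∈ s, p i * ((y i - (a + b * x i)) * x i) = 0 := by
  have hsplit : ∑ i ∈ s, p i * ((y i - (a + b * x i)) * x i) =
      ∑ i ∈ s, p i * ((x i - m) * y i) - b * v := by
    have hxy : ∑ i ∈ s, p i * ((y i - (a + b * x i)) * x i) = ∑ i ∈ s, p i * (x i * y i)
        - a * ∑ i ∈ s, p i * x i - b * ∑ i ∈ s, p i * x i ^ 2 := by
      simp only [mul_sum, ← sum_sub_distrib]
      exact sum_congr rfl fun i _ => by ring
    have hcov : ∑ i ∈ s, p i * ((x i - m) * y i) =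
        ∑ i ∈ s, p i * (x i * y i) - m * ∑ i ∈ s, p i * y i := by
      simp only [mul_sum, ← sum_sub_distrib]
      exact sum_congr rfl fun i _ => by ring
    have hvar : v = ∑ i ∈ s, p i * x i ^ 2 - 2 * m * ∑ i ∈ s, p i * x i
        + m ^ 2 * ∑ i ∈ s, p i := by
      simp only [hv, mul_sum, ← sum_sub_distrib, ← sum_add_distrib]
      exact sum_congr rfl fun i _ => by ring
    rw [hxy, hcov, hvar, hp, ← hm, ha]
    ring
  rw [hsplit, hb, div_mul_cancel₀ _ hv0, sub_self]

theorem sum_mul_mul_sub_sq_eq_of_residual_orthogonal (hp : ∑ i ∈ s, p i = 1)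
    (hm : m = ∑ i ∈ s, p i * x i) (hu : ∀ i ∈ s, u i = y i - (a + b * x i))
    (hu0 : ∑ i ∈ s, p i * u i = 0) (hu1 : ∑ i ∈ s, p i * (u i * x i) = 0)
    (hu2 : ∑ i ∈ s, p i * (u i * x i ^ 2) = 0)
    (hskew : b * ∑ i ∈ s, p i * (x i - m) ^ 3 = 0) :
    ∑ i ∈ s, p i * (y i * (x i - m) ^ 2) =
      (∑ i ∈ s, p i * y i) * ∑ i ∈ s, p i * (x i - m) ^ 2 := by
  have hmean : ∑ i ∈ s, p i * y i = a + b * m := by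
    have hsplit : ∑ i ∈ s, p i * y i =
        a * ∑ i ∈ s, p i + b * ∑ i ∈ s, p i * x i + ∑ i ∈ s, p i * u i := by
      simp only [mul_sum, ← sum_add_distrib]
      exact sum_congr rfl fun i hi => by rw [hu i hi]; ring
    rw [hsplit, hp, ← hm, hu0]
    ring
  have hres : ∑ i ∈ s, p i * (u i * (x i - m) ^ 2) = 0 := by
    have hsplit : ∑ i ∈ s, p i * (u i * (x i - m) ^ 2) = ∑ i ∈ s, p i * (u i * x i ^ 2)
        - 2 * m * ∑ i ∈ s, p i * (u i * x i) + m ^ 2 * ∑ i ∈ s, p i * u i := by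
      simp only [mul_sum, ← sum_sub_distrib, ← sum_add_distrib]
      exact sum_congr rfl fun i _ => by ring
    rw [hsplit, hu0, hu1, hu2]
    ring
  -- `y = a + b x + u` and `x (x - m)² = (x - m)³ + m (x - m)²`
  have hsplit : ∑ i ∈ s, p i * (y i * (x i - m) ^ 2) =
      (a + b * m) * ∑ i ∈ s, p i * (x i - m) ^ 2 + b * ∑ i ∈ s, p i * (x i - m) ^ 3
        + ∑ i ∈ s, p i * (u i * (x i - m) ^ 2) := by
    simp only [mul_sum, ← sum_add_distrib]
    exact sum_congr rfl fun i hi => by rw [hu i hi]; ring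
  rw [hsplit, hskew, hres, hmean]
  ring

end WeightedLeastSquares

theorem statement14_general (S : ℕ)
    (w ITTs FSs : ℕ → ℝ)
    (hw : ∀ s ∈ Finset.range S, 0 ≤ w s)
    (hFSs : ∀ s ∈ Finset.range S, 0 < FSs s)
    (FS : ℝ) (hFS : FS = ∑ s ∈ Finset.range S, w s * FSs s) (hFSpos : 0 < FS)
    (ITT : ℝ) (hITT : ITT = ∑ s ∈ Finset.range S, w s * ITTs s)
    (LATEs : ℕ → ℝ) (hLATEs : ∀ s, LATEs s = ITTs s / FSs s)
    (LATE : ℝ) (hLATE : LATE = ITT / FS)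
    (FS2bar : ℝ) (hFS2bar : FS2bar = ∑ s ∈ Finset.range S, w s * FSs s ^ 2)
    (s2LATE : ℝ)
    (hs2LATE : s2LATE = ∑ s ∈ Finset.range S, (w s * FSs s / FS) * (LATEs s - LATE) ^ 2)
    (hs2pos : 0 < s2LATE)
    (lam1 : ℝ) (hlam1 : lam1 =
      (∑ s ∈ Finset.range S, (w s * FSs s / FS) * ((LATEs s - LATE) * FSs s)) / s2LATE)
    (lam0 : ℝ) (hlam0 : lam0 = FS2bar / FS - lam1 * LATE)
    (U : ℕ → ℝ) (hU : ∀ s, U s = FSs s - (lam0 + lam1 * LATEs s))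
    (hA5a : ∑ s ∈ Finset.range S, (w s * FSs s / FS) * (U s * LATEs s ^ 2) = 0)
    (hA5b : lam1 = 0 ∨ ∑ s ∈ Finset.range S, (w s * FSs s / FS) * (LATEs s - LATE) ^ 3 = 0) :
    s2LATE = (∑ s ∈ Finset.range S, w s * (ITTs s - FSs s * LATE) ^ 2) / FS2bar := by
  have hweights : ∑ s ∈ range S, w s * FSs s / FS = 1 := by
    rw [← sum_div, ← hFS, div_self hFSpos.ne']
  have hmean : LATE = ∑ s ∈ range S, (w s * FSs s / FS) * LATEs s := by
    rw [hLATE, hITT, sum_div]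
    exact sum_congr rfl fun s hs => by rw [hLATEs]; field_simp [(hFSs s hs).ne']
  have hmeanFS : ∑ s ∈ range S, (w s * FSs s / FS) * FSs s = FS2bar / FS := by
    rw [hFS2bar, sum_div]
    exact sum_congr rfl fun s _ => by ring
  have hFS2pos : 0 < FS2bar := hFS2bar ▸ sum_mul_sq_pos_of_sum_mul_pos hw (hFS ▸ hFSpos)
  have hlam0' : lam0 = ∑ s ∈ range S, (w s * FSs s / FS) * FSs s - lam1 * LATE := by
    rw [hlam0, hmeanFS]
  have hU0 := sum_mul_residual_eq_zero hweights hmean hlam0'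
  have hU1 := sum_mul_residual_mul_eq_zero hweights hmean hs2LATE hs2pos.ne' hlam1 hlam0'
  simp only [← hU] at hU0 hU1
  have hcore := sum_mul_mul_sub_sq_eq_of_residual_orthogonal hweights hmean
    (fun s _ => hU s) hU0 hU1 hA5a (mul_eq_zero.2 hA5b)
  have hnum : ∑ s ∈ range S, w s * (ITTs s - FSs s * LATE) ^ 2 =
      FS * ∑ s ∈ range S, (w s * FSs s / FS) * (FSs s * (LATEs s - LATE) ^ 2) := by
    rw [mul_sum]
    exact sum_congr rfl fun s hs => by
      rw [hLATEs]; field_simp [(hFSs s hs).ne', hFSpos.ne']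
  rw [hnum, hcore, hmeanFS, ← hs2LATE]
  field_simp

/-- Theorem 4: identification of the weighted variance of the LATEs under
Assumption 5. -/
theorem statement14 (S : ℕ) (hS : 0 < S)
    (w ITTs FSs : ℕ → ℝ)
    (hw : ∀ s ∈ Finset.range S, 0 ≤ w s)
    (hwsum : ∑ s ∈ Finset.range S, w s = 1)
    (hFSs : ∀ s ∈ Finset.range S, 0 < FSs s)
    (FS : ℝ) (hFS : FS = ∑ s ∈ Finset.range S, w s * FSs s) (hFSpos : 0 < FS)
    (ITT : ℝ) (hITT : ITT = ∑ s ∈ Finset.range S, w s * ITTs s)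
    (LATEs : ℕ → ℝ) (hLATEs : ∀ s, LATEs s = ITTs s / FSs s)
    (LATE : ℝ) (hLATE : LATE = ITT / FS)
    (FS2bar : ℝ) (hFS2bar : FS2bar = ∑ s ∈ Finset.range S, w s * FSs s ^ 2)
    (s2LATE : ℝ)
    (hs2LATE : s2LATE = ∑ s ∈ Finset.range S, (w s * FSs s / FS) * (LATEs s - LATE) ^ 2)
    (hs2pos : 0 < s2LATE)
    (lam1 : ℝ) (hlam1 : lam1 =
      (∑ s ∈ Finset.range S, (w s * FSs s / FS) * ((LATEs s - LATE) * FSs s)) / s2LATE)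
    (lam0 : ℝ) (hlam0 : lam0 = FS2bar / FS - lam1 * LATE)
    (U : ℕ → ℝ) (hU : ∀ s, U s = FSs s - (lam0 + lam1 * LATEs s))
    (hA5a : ∑ s ∈ Finset.range S, (w s * FSs s / FS) * (U s * LATEs s ^ 2) = 0)
    (hA5b : lam1 = 0 ∨ ∑ s ∈ Finset.range S, (w s * FSs s / FS) * (LATEs s - LATE) ^ 3 = 0) :
    s2LATE = (∑ s ∈ Finset.range S, w s * (ITTs s - FSs s * LATE) ^ 2) / FS2bar :=
  statement14_general S w ITTs FSs hw hFSs FS hFS hFSpos ITT hITT LATEs hLATEs LATE hLATE FS2bar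
    hFS2bar s2LATE hs2LATE hs2pos lam1 hlam1 lam0 hlam0 U hU hA5a hA5b

end MultiSite
end

section
/- If the least-squares residuals satisfy the orthogonality condition Σ_s (w_s FS_s/FS) U_s LATE_s² = 0 (in addition to the automatic conditions Σ_s (w_s FS_s/FS)U_s = Σ_s (w_s FS_s/FS)U_s LATE_s = 0), then Σ_{s=1}^S w_s (ITT_s − FS_s · LATE)² = Σ_{s=1}^S w_s FS_s (λ₀ + λ₁ LATE_s)(LATE_s − LATE)². -/
open MeasureTheory ProbabilityTheory Filter Finset
open scoped ENNReal NNReal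

namespace MultiSite

variable {Ω : Type*} [MeasurableSpace Ω]

/-! A residual that is orthogonal to `1`, `x` and `x²` is orthogonal to every `(x - c)²`; and
since `ITT_s = FS_s · LATE_s`, each summand `w_s (ITT_s - FS_s · LATE)²` equals
`w_s FS_s · FS_s (LATE_s - LATE)²`, in which `FS_s` splits into fitted value plus residual. -/

theorem sum_mul_mul_sub_sq_eq_zero {ι : Type*} (t : Finset ι) (a u x : ι → ℝ)
    (h0 : ∑ i ∈ t, a i * u i = 0) (h1 : ∑ i ∈ t, a i * (u i * x i) = 0)
    (h2 : ∑ i ∈ t, a i * (u i * x i ^ 2) = 0) (c : ℝ) :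
    ∑ i ∈ t, a i * (u i * (x i - c) ^ 2) = 0 := by
  have expand : ∀ i, a i * (u i * (x i - c) ^ 2)
      = a i * (u i * x i ^ 2) - 2 * c * (a i * (u i * x i)) + c ^ 2 * (a i * u i) :=
    fun i => by ring
  simp only [expand, sum_add_distrib, sum_sub_distrib, ← mul_sum, h0, h1, h2]
  ring

theorem mul_sub_mul_sq_eq_fitted_add_residual {w I F L U f c : ℝ} (hF : F ≠ 0)
    (hL : L = I / F) (hU : U = F - f) :
    w * (I - F * c) ^ 2 = w * F * (f * (L - c) ^ 2) + w * F * (U * (L - c) ^ 2) := by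
  subst hL hU
  field_simp
  ring

theorem statement15_general (S : ℕ)
    (w ITTs FSs : ℕ → ℝ)
    (hFSs : ∀ s ∈ Finset.range S, 0 < FSs s)
    (FS : ℝ) (hFSpos : 0 < FS)
    (LATEs : ℕ → ℝ) (hLATEs : ∀ s, LATEs s = ITTs s / FSs s)
    (LATE : ℝ)
    (lam0 lam1 : ℝ)
    (U : ℕ → ℝ) (hU : ∀ s, U s = FSs s - (lam0 + lam1 * LATEs s))
    (horth0 : ∑ s ∈ Finset.range S, (w s * FSs s / FS) * U s = 0)
    (horth1 : ∑ s ∈ Finset.range S, (w s * FSs s / FS) * (U s * LATEs s) = 0)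
    (horth2 : ∑ s ∈ Finset.range S, (w s * FSs s / FS) * (U s * LATEs s ^ 2) = 0) :
    ∑ s ∈ Finset.range S, w s * (ITTs s - FSs s * LATE) ^ 2
      = ∑ s ∈ Finset.range S, w s * FSs s * ((lam0 + lam1 * LATEs s) * (LATEs s - LATE) ^ 2) := by
  have residual_term : ∑ s ∈ Finset.range S, w s * FSs s * (U s * (LATEs s - LATE) ^ 2) = 0 := by
    calc ∑ s ∈ Finset.range S, w s * FSs s * (U s * (LATEs s - LATE) ^ 2)
        = FS * ∑ s ∈ Finset.range S, (w s * FSs s / FS) * (U s * (LATEs s - LATE) ^ 2) := by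
          rw [mul_sum]
          refine sum_congr rfl fun s _ => ?_
          field_simp
      _ = 0 := by rw [sum_mul_mul_sub_sq_eq_zero _ _ _ _ horth0 horth1 horth2 LATE, mul_zero]
  rw [sum_congr rfl fun s hs =>
      mul_sub_mul_sq_eq_fitted_add_residual (hFSs s hs).ne' (hLATEs s) (hU s),
    sum_add_distrib, residual_term, add_zero]

/-- a key step in the proof of Theorem 4, valid under the residual
orthogonality conditions. -/
theorem statement15 (S : ℕ) (hS : 0 < S)
    (w ITTs FSs : ℕ → ℝ)
    (hw : ∀ s ∈ Finset.range S, 0 ≤ w s)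
    (hwsum : ∑ s ∈ Finset.range S, w s = 1)
    (hFSs : ∀ s ∈ Finset.range S, 0 < FSs s)
    (FS : ℝ) (hFS : FS = ∑ s ∈ Finset.range S, w s * FSs s) (hFSpos : 0 < FS)
    (ITT : ℝ) (hITT : ITT = ∑ s ∈ Finset.range S, w s * ITTs s)
    (LATEs : ℕ → ℝ) (hLATEs : ∀ s, LATEs s = ITTs s / FSs s)
    (LATE : ℝ) (hLATE : LATE = ITT / FS)
    (lam0 lam1 : ℝ)
    (U : ℕ → ℝ) (hU : ∀ s, U s = FSs s - (lam0 + lam1 * LATEs s))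
    (horth0 : ∑ s ∈ Finset.range S, (w s * FSs s / FS) * U s = 0)
    (horth1 : ∑ s ∈ Finset.range S, (w s * FSs s / FS) * (U s * LATEs s) = 0)
    (horth2 : ∑ s ∈ Finset.range S, (w s * FSs s / FS) * (U s * LATEs s ^ 2) = 0) :
    ∑ s ∈ Finset.range S, w s * (ITTs s - FSs s * LATE) ^ 2
      = ∑ s ∈ Finset.range S, w s * FSs s * ((lam0 + lam1 * LATEs s) * (LATEs s - LATE) ^ 2) :=
  statement15_general S w ITTs FSs hFSs FS hFSpos LATEs hLATEs LATE lam0 lam1 U hU horth0 horth1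
    horth2

end MultiSite
end
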